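/- arXiv:2511.22370 — 3 statements merged into one kernel-verified Lean document; each statement's English description precedes it below -/
import Mathlib

section
/- Consider an altruistic hedonic game under avg-EQ utilities on n players whose network of friends contains a (d,k')-dome gadget on a player set P, where d ≥ 1, k' > 2d+3, and n ≥ k'·(d+1), and such that no player of P other than the top player p* has a friend outside P. Let Γ be a coalition structure containing P as a coalition. If a coalition C blocks Γ, then C contains no player of the base clique of the gadget (in particular, no fringe player). -/
open Finset
open scoped Classical

section AHGDefs

variable {N : Type*} [Fintype N] [DecidableEq N]

/-- The set of friends of player `i` inside coalition `C`. -/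
noncomputable def friendsIn (G : SimpleGraph N) (C : Finset N) (i : N) : Finset N :=
  C.filter fun j => G.Adj i j

/-- The friend-oriented valuation of coalition `C` by player `i`:
`val_i(C) = n·|F_i ∩ C| − |E_i ∩ C|`. -/
noncomputable def fval (G : SimpleGraph N) (C : Finset N) (i : N) : ℤ :=
  (Fintype.card N : ℤ) * ((friendsIn G C i).card : ℤ)
    - ((C.filter fun j => ¬ G.Adj i j ∧ j ≠ i).card : ℤ)

/-- Average-based equal-treatment utility. -/
noncomputable def utilAvgEQ (G : SimpleGraph N) (C : Finset N) (i : N) : ℚ :=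
  (∑ c ∈ insert i (friendsIn G C i), (fval G C c : ℚ)) /
    ((insert i (friendsIn G C i)).card : ℚ)

/-- Average-based altruistic-treatment utility with weight `w`. -/
noncomputable def utilAvgAL (G : SimpleGraph N) (w : ℚ) (C : Finset N) (i : N) : ℚ :=
  (fval G C i : ℚ) +
    w * (if (friendsIn G C i).Nonempty then
          (∑ c ∈ friendsIn G C i, (fval G C c : ℚ)) / ((friendsIn G C i).card : ℚ)
         else 0)

/-- Min-based equal-treatment utility. -/
noncomputable def utilMinEQ (G : SimpleGraph N) (C : Finset N) (i : N) : ℤ :=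
  (insert i (friendsIn G C i)).inf' (insert_nonempty _ _) (fval G C)

/-- Min-based altruistic-treatment utility with weight `w`. -/
noncomputable def utilMinAL (G : SimpleGraph N) (w : ℤ) (C : Finset N) (i : N) : ℤ :=
  fval G C i +
    w * (if h : (friendsIn G C i).Nonempty then (friendsIn G C i).inf' h (fval G C) else 0)

/-- A coalition structure (partition of the players), given as the map sending
each player to its coalition. -/
structure CoalitionStructure (N : Type*) [Fintype N] [DecidableEq N] where
  part : N → Finset N
  mem_part : ∀ i, i ∈ part i
  part_eq : ∀ i j, j ∈ part i → part j = part i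

/-- A (nonempty) coalition `C` blocks the coalition structure `Γ`. -/
def Blocks {α : Type*} [LT α] (util : Finset N → N → α) (Γ : CoalitionStructure N)
    (C : Finset N) : Prop :=
  C.Nonempty ∧ ∀ i ∈ C, util (Γ.part i) i < util C i

/-- Core stability: no nonempty coalition blocks `Γ`. -/
def CoreStable {α : Type*} [LT α] (util : Finset N → N → α)
    (Γ : CoalitionStructure N) : Prop :=
  ¬ ∃ C : Finset N, Blocks util Γ C

/-- The base clique of a `(d,k')`-dome gadget on `P` with top player `top`
and mid players `mid`. -/
noncomputable def domeBase {d : ℕ} (P : Finset N) (top : N) (mid : Fin d → N) : Finset N :=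
  P \ insert top (Finset.univ.image mid)

/-- `P` carries a `(d,k')`-dome gadget of the graph `G`, with top player `top`,
mid players `mid i` and fringe players `fringe i`. -/
structure IsDomeGadget (G : SimpleGraph N) (d k' : ℕ) (P : Finset N) (top : N)
    (mid fringe : Fin d → N) : Prop where
  card_eq : P.card = k'
  top_mem : top ∈ P
  mid_mem : ∀ i, mid i ∈ P
  mid_inj : Function.Injective mid
  mid_ne_top : ∀ i, mid i ≠ top
  fringe_mem : ∀ i, fringe i ∈ domeBase P top mid
  fringe_inj : Function.Injective fringe
  adj_iff : ∀ x ∈ P, ∀ y ∈ P, (G.Adj x y ↔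
    ((x = top ∧ ∃ i, y = mid i) ∨ (y = top ∧ ∃ i, x = mid i) ∨
     (x ∈ domeBase P top mid ∧ y ∈ domeBase P top mid ∧ x ≠ y) ∨
     (∃ i, (x = mid i ∧ y = fringe i) ∨ (y = mid i ∧ x = fringe i))))

/-- `P` carries a `(d,k')`-dome gadget with top player `top` (mid and fringe
players existentially quantified). -/
def HasDomeGadget (G : SimpleGraph N) (d k' : ℕ) (P : Finset N) (top : N) : Prop :=
  ∃ mid fringe : Fin d → N, IsDomeGadget G d k' P top mid fringe
end AHGDefs


section Aux

lemma fval_mem_eq {N : Type*} [Fintype N] [DecidableEq N] (G : SimpleGraph N)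
    (C : Finset N) (c : N) (hc : c ∈ C) :
    (fval G C c : ℚ) = ((Fintype.card N : ℚ) + 1) * ((friendsIn G C c).card : ℚ)
      - ((C.card : ℚ) - 1) := by
  have h0 : (C.filter fun j => ¬ G.Adj c j) = insert c (C.filter fun j => ¬ G.Adj c j ∧ j ≠ c) := by
    ext y
    simp only [mem_filter, mem_insert]
    constructor
    · rintro ⟨hy, hadj⟩
      by_cases hyc : y = c
      · exact Or.inl hyc
      · exact Or.inr ⟨hy, hadj, hyc⟩
    · rintro (rfl | ⟨hy, hadj, hyc⟩)
      · exact ⟨hc, fun h => G.irrefl h⟩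
      · exact ⟨hy, hadj⟩
  have h1 : c ∉ (C.filter fun j => ¬ G.Adj c j ∧ j ≠ c) := by simp
  have h2 : (C.filter fun j => G.Adj c j).card + (C.filter fun j => ¬ G.Adj c j).card = C.card :=
    Finset.card_filter_add_card_filter_not (p := fun j => G.Adj c j)
  rw [h0, card_insert_of_notMem h1] at h2
  have h3 : (friendsIn G C c).card = (C.filter fun j => G.Adj c j).card := rfl
  unfold fval
  push_cast
  rw [h3]
  have := congrArg (fun x : ℕ => (x : ℚ)) h2
  push_cast at this
  linarith

set_option maxHeartbeats 1600000

section Arith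
variable (d m t q n Sc cC : ℚ)

lemma arith_B2 (hd : 1 ≤ d) (hm : d + 3 ≤ m) (hn : (m+d+1)*(d+1) ≤ n)
    (hq : q ≤ d - 1) (hSc : Sc ≤ m*(m-1)+q) (hcC : m ≤ cC) :
    m*m*((m+d+1) - cC) ≤ (n+1)*(m*(m*m-m+d) - m*Sc) := by
  have hm0 : (0:ℚ) ≤ m := by linarith
  have hn0 : (0:ℚ) ≤ n + 1 := by nlinarith
  have hn1 : m*(d+1) ≤ n+1 := by nlinarith [sq_nonneg (d+1)]
  have h1 : m ≤ m*(m*m-m+d) - m*Sc := by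
    nlinarith [mul_nonneg hm0 (show (0:ℚ) ≤ m*m-m+d - Sc - 1 by linarith)]
  calc m*m*((m+d+1)-cC) ≤ m*m*(d+1) := by nlinarith
    _ = m*(d+1)*m := by ring
    _ ≤ (n+1)*m := mul_le_mul_of_nonneg_right hn1 hm0
    _ ≤ (n+1)*(m*(m*m-m+d) - m*Sc) := mul_le_mul_of_nonneg_left h1 hn0

lemma arith_A2 (hd : 1 ≤ d) (hm : d + 3 ≤ m) (hn : (m+d+1)*(d+1) ≤ n)
    (hSc : Sc ≤ m*(m-1)+d+1) (hcC : m+1 ≤ cC) :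
    (m+1)*(m+1)*((m+d+1) - cC) ≤ (n+1)*((m+1)*(m*m-m+d+2) - (m+1)*Sc) := by
  have hm0 : (0:ℚ) ≤ m + 1 := by linarith
  have hn0 : (0:ℚ) ≤ n + 1 := by nlinarith
  have hn1 : (m+1)*(d+1) ≤ n+1 := by
    nlinarith [mul_nonneg (show (0:ℚ) ≤ d by linarith) (show (0:ℚ) ≤ d+1 by linarith)]
  have h1 : m+1 ≤ (m+1)*(m*m-m+d+2) - (m+1)*Sc := by
    nlinarith [mul_nonneg hm0 (show (0:ℚ) ≤ m*m-m+d+2 - Sc - 1 by linarith)]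
  calc (m+1)*(m+1)*((m+d+1)-cC) ≤ (m+1)*(m+1)*d := by nlinarith [mul_nonneg hm0 hm0]
    _ ≤ (m+1)*(d+1)*(m+1) := by nlinarith [mul_nonneg hm0 hm0]
    _ ≤ (n+1)*(m+1) := mul_le_mul_of_nonneg_right hn1 hm0
    _ ≤ (n+1)*((m+1)*(m*m-m+d+2) - (m+1)*Sc) := mul_le_mul_of_nonneg_left h1 hn0

lemma arith_B1 (hd : 1 ≤ d) (hm : d + 3 ≤ m) (hn : (m+d+1)*(d+1) ≤ n)
    (ht1 : 1 ≤ t) (ht2 : t ≤ m - 1)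
    (hq : q ≤ d) (hSc : Sc ≤ t*(t-1)+q) (hcC : 1 ≤ cC) :
    m*t*((m+d+1) - cC) ≤ (n+1)*(t*(m*m-m+d) - m*Sc) := by
  have hmt : (0:ℚ) ≤ m - t := by linarith
  have htm : m ≤ t*m := by
    nlinarith [mul_nonneg (show (0:ℚ) ≤ t-1 by linarith) (show (0:ℚ) ≤ m by linarith)]
  have hE2nn : (0:ℚ) ≤ (m-t)*(t*m-d) := mul_nonneg hmt (by linarith)
  have hn0 : (0:ℚ) ≤ n + 1 := by nlinarith
  have hE : (m-t)*(t*m-d) ≤ t*(m*m-m+d) - m*Sc := by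
    nlinarith [mul_nonneg (show (0:ℚ) ≤ m by linarith) (show (0:ℚ) ≤ t*(t-1)+q - Sc by linarith)]
  have hstep : t*m ≤ (d+1)*((m-t)*(t*m-d)) := by
    nlinarith [mul_nonneg hmt (show (0:ℚ) ≤ d*(t*m-d-1) by nlinarith),
      mul_nonneg (show (0:ℚ) ≤ m-t-1 by linarith) (show (0:ℚ) ≤ t*m by nlinarith)]
  have hbig : (m+d+1)*(t*m) ≤ (n+1)*((m-t)*(t*m-d)) := by
    calc (m+d+1)*(t*m) ≤ (m+d+1)*((d+1)*((m-t)*(t*m-d))) :=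
          mul_le_mul_of_nonneg_left hstep (by linarith)
      _ = (m+d+1)*(d+1)*((m-t)*(t*m-d)) := by ring
      _ ≤ (n+1)*((m-t)*(t*m-d)) := mul_le_mul_of_nonneg_right (by linarith) hE2nn
  calc m*t*((m+d+1)-cC) ≤ (m+d+1)*(t*m) := by
        nlinarith [mul_nonneg (show (0:ℚ) ≤ m by linarith) (show (0:ℚ) ≤ t by linarith)]
    _ ≤ (n+1)*((m-t)*(t*m-d)) := hbig
    _ ≤ (n+1)*(t*(m*m-m+d) - m*Sc) := mul_le_mul_of_nonneg_left hE hn0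

lemma arith_C (hd : 1 ≤ d) (hm : d + 3 ≤ m) (hn : (m+d+1)*(d+1) ≤ n)
    (ht1 : 1 ≤ t) (ht2 : t ≤ m - 1)
    (hq : q ≤ d - 1) (hSc : Sc ≤ t*(t-1)+q) (hcC : t ≤ cC) :
    (m+1)*t*((m+d+1) - cC) ≤ (n+1)*(t*(m*m-m+d+2) - (m+1)*Sc) := by
  have hn0 : (0:ℚ) ≤ n + 1 := by nlinarith
  have hn2 : (m+1)*(d+1) ≤ n+1 := by
    nlinarith [mul_nonneg (show (0:ℚ) ≤ d by linarith) (show (0:ℚ) ≤ d+1 by linarith)]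
  have hE : t*(m*m-m+d+2) - (m+1)*(t*t-t+d-1) ≤ t*(m*m-m+d+2) - (m+1)*Sc := by
    nlinarith [mul_nonneg (show (0:ℚ) ≤ m+1 by linarith) (show (0:ℚ) ≤ t*(t-1)+q - Sc by linarith)]
  have hG1 : 0 ≤ (n+1)*(m*(m-d)+3) - (m+1)*(m+d) := by
    nlinarith [mul_nonneg hn0 (show (0:ℚ) ≤ m*(m-d) - 3*m by nlinarith),
      mul_nonneg (show (0:ℚ) ≤ n - m - d by
        nlinarith [mul_nonneg (show (0:ℚ) ≤ m+d+1 by linarith) (show (0:ℚ) ≤ d by linarith)])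
        (show (0:ℚ) ≤ m+1 by linarith)]
  have hGm : 0 ≤ (n+1)*(5*m-2*d-3) - (m+1)*(m-1)*(d+2) := by
    have h1 : (m+1)*(d+1)*(3*(m+1)) ≤ (n+1)*(5*m-2*d-3) := by
      apply mul_le_mul hn2 (by linarith) (by linarith) hn0
    nlinarith [mul_nonneg (show (0:ℚ) ≤ m+1 by linarith)
      (show (0:ℚ) ≤ 2*m*d+m+4*d+5 by
        nlinarith [mul_nonneg (show (0:ℚ) ≤ m by linarith) (show (0:ℚ) ≤ d by linarith)])]
  have hnn : (0:ℚ) ≤ (m+1)*n := by nlinarith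
  have hkey : 0 ≤ (n+1)*(t*(m*m-m+d+2) - (m+1)*(t*t-t+d-1)) - (m+1)*t*(m+d+1-t) := by
    nlinarith [mul_nonneg (show (0:ℚ) ≤ m-1-t by linarith) hG1,
      mul_nonneg (show (0:ℚ) ≤ t-1 by linarith) hGm,
      mul_nonneg (mul_nonneg (mul_nonneg hnn (show (0:ℚ) ≤ m-2 by linarith))
        (show (0:ℚ) ≤ t-1 by linarith)) (show (0:ℚ) ≤ m-1-t by linarith),
      mul_pos (show (0:ℚ) < m-2 by linarith) (show (0:ℚ) < 1 by norm_num)]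
  calc (m+1)*t*((m+d+1)-cC) ≤ (m+1)*t*(m+d+1-t) := by
        nlinarith [mul_nonneg (show (0:ℚ) ≤ m+1 by linarith) (show (0:ℚ) ≤ t by linarith)]
    _ ≤ (n+1)*(t*(m*m-m+d+2) - (m+1)*(t*t-t+d-1)) := by linarith
    _ ≤ (n+1)*(t*(m*m-m+d+2) - (m+1)*Sc) := mul_le_mul_of_nonneg_left hE hn0

lemma arith_A1 (fm : ℚ) (hd : 1 ≤ d) (hm : d + 3 ≤ m) (hn : (m+d+1)*(d+1) ≤ n)
    (ht1 : 1 ≤ t) (ht2 : t ≤ m - 1)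
    (hq : q ≤ d) (hfm : fm ≤ 2) (hSc : Sc ≤ t*(t-1)+q+fm) (hcC : t+1 ≤ cC) :
    (m+1)*(t+1)*((m+d+1) - cC) ≤ (n+1)*((t+1)*(m*m-m+d+2) - (m+1)*Sc) := by
  have hn0 : (0:ℚ) ≤ n + 1 := by nlinarith
  have hn2 : (m+1)*(d+1) ≤ n+1 := by
    nlinarith [mul_nonneg (show (0:ℚ) ≤ d by linarith) (show (0:ℚ) ≤ d+1 by linarith)]
  have hE : (t+1)*(m*m-m+d+2) - (m+1)*(t*t-t+d+2) ≤ (t+1)*(m*m-m+d+2) - (m+1)*Sc := by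
    nlinarith [mul_nonneg (show (0:ℚ) ≤ m+1 by linarith) (show (0:ℚ) ≤ t*(t-1)+q+fm - Sc by linarith)]
  have hG1 : 0 ≤ (n+1)*((m-1)*(2*m-d-2)) - (m+1)*2*(m+d-1) := by
    have h2td : 2*(m+d+1) ≤ n+1 := by
      nlinarith [mul_nonneg (show (0:ℚ) ≤ m+d+1 by linarith) (show (0:ℚ) ≤ d-1 by linarith)]
    have h1 : 2*(m+d+1)*((m-1)*(m+1)) ≤ (n+1)*((m-1)*(2*m-d-2)) := by
      apply mul_le_mul h2td ?_ ?_ hn0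
      · nlinarith [mul_nonneg (show (0:ℚ) ≤ m-1 by linarith) (show (0:ℚ) ≤ m-d-3 by linarith)]
      · nlinarith [mul_nonneg (show (0:ℚ) ≤ m-1 by linarith) (show (0:ℚ) ≤ m+1 by linarith)]
    nlinarith [mul_nonneg (show (0:ℚ) ≤ m+1 by linarith)
      (show (0:ℚ) ≤ 2*(m+d+1)*(m-1) - 2*(m+d-1) by
        nlinarith [mul_nonneg (show (0:ℚ) ≤ m+d by linarith) (show (0:ℚ) ≤ m-2 by linarith)])]
  have hGm : 0 ≤ (n+1)*(m*m+m-d-4) - (m+1)*m*(d+1) := by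
    have hX : (0:ℚ) ≤ m*m+m-d-4 := by nlinarith
    have h1 : (m+1)*(d+1)*(m*m+m-d-4) ≤ (n+1)*(m*m+m-d-4) :=
      mul_le_mul_of_nonneg_right hn2 hX
    have h2 : (m+1)*(d+1)*(m*m+m-d-4) = (m+1)*m*(d+1) + (m+1)*(d+1)*(m*m-d-4) := by ring
    have h3 : (0:ℚ) ≤ (m+1)*(d+1)*(m*m-d-4) := by
      apply mul_nonneg (mul_nonneg (by linarith) (by linarith)) (by nlinarith)
    linarith
  have hnn : (0:ℚ) ≤ (m+1)*n := by nlinarith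
  have hkey : 0 ≤ (n+1)*((t+1)*(m*m-m+d+2) - (m+1)*(t*t-t+d+2)) - (m+1)*(t+1)*(m+d-t) := by
    nlinarith [mul_nonneg (show (0:ℚ) ≤ m-1-t by linarith) hG1,
      mul_nonneg (show (0:ℚ) ≤ t-1 by linarith) hGm,
      mul_nonneg (mul_nonneg (mul_nonneg hnn (show (0:ℚ) ≤ m-2 by linarith))
        (show (0:ℚ) ≤ t-1 by linarith)) (show (0:ℚ) ≤ m-1-t by linarith),
      mul_pos (show (0:ℚ) < m-2 by linarith) (show (0:ℚ) < 1 by norm_num)]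
  calc (m+1)*(t+1)*((m+d+1)-cC) ≤ (m+1)*(t+1)*(m+d-t) := by
        nlinarith [mul_nonneg (show (0:ℚ) ≤ m+1 by linarith) (show (0:ℚ) ≤ t+1 by linarith)]
    _ ≤ (n+1)*((t+1)*(m*m-m+d+2) - (m+1)*(t*t-t+d+2)) := by linarith
    _ ≤ (n+1)*((t+1)*(m*m-m+d+2) - (m+1)*Sc) := mul_le_mul_of_nonneg_left hE hn0

end Arith
end Aux

set_option maxHeartbeats 2000000 in
/-- Proposition (dome gadget, avg-EQ): in an avg-EQ altruistic hedonic game on `n`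
players whose network of friends `G` contains a `(d,k')`-dome gadget on `P`
(`d ≥ 1`, `k' > 2d+3`, `n ≥ k'·(d+1)`) such that no player of `P` except the top
player has a friend outside `P`, if `P` is a coalition of the coalition structure `Γ`
and a coalition `C` blocks `Γ`, then `C` contains no player of the base clique
(in particular, no fringe player). -/
theorem dome_base_not_in_blocking_avgEQ {N : Type*} [Fintype N] [DecidableEq N]
    (G : SimpleGraph N) (d k' : ℕ) (hd : 1 ≤ d) (hk' : 2 * d + 3 < k')
    (hn : k' * (d + 1) ≤ Fintype.card N)
    (P : Finset N) (top : N) (mid fringe : Fin d → N)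
    (hgadget : IsDomeGadget G d k' P top mid fringe)
    (houtside : ∀ x ∈ P, x ≠ top → ∀ y : N, G.Adj x y → y ∈ P)
    (Γ : CoalitionStructure N) (hΓ : ∀ i ∈ P, Γ.part i = P)
    (C : Finset N) (hC : Blocks (utilAvgEQ G) Γ C) :
    ∀ x ∈ domeBase P top mid, x ∉ C := by
  classical
  obtain ⟨hPcard, htopP, hmidP, hmidinj, hmidtop, hfrmem, hfrinj, hadj⟩ := hgadget
  intro x0 hx0 hx0C
  set B := domeBase P top mid with hBdef
  have hx0B : x0 ∈ B := hx0
  set m := B.card with hmdef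
  set CB := C ∩ B with hCBdef
  set Q := Finset.univ.filter (fun j : Fin d => fringe j ∈ C ∧ mid j ∈ C) with hQdef
  -- basic membership facts
  have hBsub : B ⊆ P := sdiff_subset
  have htopB : top ∉ B := fun h => (mem_sdiff.mp h).2 (mem_insert_self _ _)
  have hmidB : ∀ i, mid i ∉ B := fun i h =>
    (mem_sdiff.mp h).2 (mem_insert_of_mem (mem_image_of_mem _ (mem_univ i)))
  have hfrB : ∀ i, fringe i ∈ B := hfrmem
  have hfrP : ∀ i, fringe i ∈ P := fun i => hBsub (hfrB i)
  have hfrtop : ∀ i, fringe i ≠ top := fun i h => htopB (h ▸ hfrB i)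
  have hBtop : ∀ b ∈ B, b ≠ top := fun b hb h => htopB (h ▸ hb)
  -- cardinalities
  have hIsub : insert top (Finset.univ.image mid) ⊆ P := by
    refine insert_subset htopP ?_
    intro y hy
    obtain ⟨i, _, rfl⟩ := mem_image.mp hy
    exact hmidP i
  have htopI : top ∉ Finset.univ.image mid := by
    intro h
    obtain ⟨i, _, he⟩ := mem_image.mp h
    exact hmidtop i he
  have hIcard : (insert top (Finset.univ.image mid)).card = d + 1 := by
    rw [card_insert_of_notMem htopI, card_image_of_injective _ hmidinj, card_univ,
      Fintype.card_fin]
  have hmk : m + (d + 1) = k' := by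
    rw [hmdef, hBdef, ← hIcard, ← hPcard]
    exact card_sdiff_add_card_eq_card hIsub
  have hdm : d + 3 ≤ m := by omega
  -- rational versions of numeric hypotheses
  have hdQ : (1:ℚ) ≤ (d:ℚ) := by exact_mod_cast hd
  have hdmQ : (d:ℚ) + 3 ≤ (m:ℚ) := by exact_mod_cast hdm
  have hnQ : ((m:ℚ)+(d:ℚ)+1)*((d:ℚ)+1) ≤ ((Fintype.card N : ℕ):ℚ) := by
    have h1 : (m + d + 1) * (d+1) ≤ Fintype.card N := by
      rw [show m+d+1 = k' by omega]
      exact hn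
    exact_mod_cast h1
  have hkQ : ((k':ℕ):ℚ) = (m:ℚ)+(d:ℚ)+1 := by exact_mod_cast (by omega : k' = m+d+1)
  -- adjacency characterizations
  have adjB : ∀ b ∈ B, ∀ y, G.Adj b y ↔ ((y ∈ B ∧ y ≠ b) ∨ ∃ i, b = fringe i ∧ y = mid i) := by
    intro b hb y
    constructor
    · intro h
      have hyP : y ∈ P := houtside b (hBsub hb) (hBtop b hb) y h
      rcases (hadj b (hBsub hb) y hyP).mp h with ⟨h1, _⟩ | ⟨h1, i, h2⟩ | ⟨_, hyB, hne⟩ |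
        ⟨i, ⟨h1, h2⟩ | ⟨h1, h2⟩⟩
      · exact absurd h1 (hBtop b hb)
      · exact absurd h2 (fun hh => hmidB i (hh ▸ hb))
      · exact Or.inl ⟨hyB, fun he => hne he.symm⟩
      · exact absurd h1 (fun hh => hmidB i (hh ▸ hb))
      · exact Or.inr ⟨i, h2, h1⟩
    · rintro (⟨hyB, hne⟩ | ⟨i, rfl, rfl⟩)
      · exact (hadj b (hBsub hb) y (hBsub hyB)).mpr
          (Or.inr (Or.inr (Or.inl ⟨hb, hyB, fun he => hne he.symm⟩)))
      · exact (hadj _ (hfrP i) _ (hmidP i)).mpr (Or.inr (Or.inr (Or.inr ⟨i, Or.inr ⟨rfl, rfl⟩⟩)))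
  have adjM : ∀ (i : Fin d) (y : N), G.Adj (mid i) y ↔ (y = top ∨ y = fringe i) := by
    intro i y
    constructor
    · intro h
      have hyP : y ∈ P := houtside (mid i) (hmidP i) (hmidtop i) y h
      rcases (hadj _ (hmidP i) y hyP).mp h with ⟨h1, _⟩ | ⟨h1, _⟩ | ⟨hmB, _, _⟩ |
        ⟨j, ⟨h1, h2⟩ | ⟨h1, h2⟩⟩
      · exact absurd h1 (hmidtop i)
      · exact Or.inl h1
      · exact absurd hmB (hmidB i)
      · exact Or.inr (h2.trans (congrArg fringe (hmidinj h1)).symm)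
      · exact absurd h2 (fun hh => hmidB i (hh ▸ hfrB j))
    · rintro (rfl | rfl)
      · exact (hadj _ (hmidP i) _ htopP).mpr (Or.inr (Or.inl ⟨rfl, i, rfl⟩))
      · exact (hadj _ (hmidP i) _ (hfrP i)).mpr (Or.inr (Or.inr (Or.inr ⟨i, Or.inl ⟨rfl, rfl⟩⟩)))
  -- friends inside P
  have frP_nf : ∀ b ∈ B, (∀ i, b ≠ fringe i) → friendsIn G P b = B.erase b := by
    intro b hb hnf
    ext y
    simp only [friendsIn, mem_filter, mem_erase]
    constructor
    · rintro ⟨hyP, hadjy⟩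
      rcases (adjB b hb y).mp hadjy with ⟨hyB, hne⟩ | ⟨i, hbf, _⟩
      · exact ⟨hne, hyB⟩
      · exact absurd hbf (hnf i)
    · rintro ⟨hne, hyB⟩
      exact ⟨hBsub hyB, (adjB b hb y).mpr (Or.inl ⟨hyB, hne⟩)⟩
  have frP_f : ∀ i, friendsIn G P (fringe i) = insert (mid i) (B.erase (fringe i)) := by
    intro i
    ext y
    simp only [friendsIn, mem_filter, mem_erase, mem_insert]
    constructor
    · rintro ⟨hyP, hadjy⟩
      rcases (adjB _ (hfrB i) y).mp hadjy with ⟨hyB, hne⟩ | ⟨j, hbf, hy⟩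
      · exact Or.inr ⟨hne, hyB⟩
      · exact Or.inl (hy.trans (congrArg mid (hfrinj hbf)).symm)
    · rintro (rfl | ⟨hne, hyB⟩)
      · exact ⟨hmidP i, (adjB _ (hfrB i) _).mpr (Or.inr ⟨i, rfl, rfl⟩)⟩
      · exact ⟨hBsub hyB, (adjB _ (hfrB i) y).mpr (Or.inl ⟨hyB, hne⟩)⟩
  have frP_mid : ∀ i, friendsIn G P (mid i) = {top, fringe i} := by
    intro i
    ext y
    simp only [friendsIn, mem_filter, mem_insert, mem_singleton]
    constructor
    · rintro ⟨hyP, hadjy⟩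
      exact (adjM i y).mp hadjy
    · rintro (rfl | rfl)
      · exact ⟨htopP, (adjM i _).mpr (Or.inl rfl)⟩
      · exact ⟨hfrP i, (adjM i _).mpr (Or.inr rfl)⟩
  have cardP_mid : ∀ i, ((friendsIn G P (mid i)).card : ℚ) = 2 := by
    intro i
    rw [frP_mid i, card_insert_of_notMem (by simp [Ne.symm (hfrtop i)]), card_singleton]
    norm_num
  have cardP_base : ∀ b ∈ B, ((friendsIn G P b).card : ℚ)
      = (m:ℚ) - 1 + (if ∃ i, b = fringe i then 1 else 0) := by
    intro b hb
    have hh : ((B.erase b).card : ℚ) + 1 = (m:ℚ) := by exact_mod_cast card_erase_add_one hb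
    by_cases hbf : ∃ i, b = fringe i
    · obtain ⟨i, rfl⟩ := hbf
      rw [if_pos ⟨i, rfl⟩, frP_f i,
        card_insert_of_notMem (fun h => hmidB i (erase_subset _ _ h))]
      push_cast
      linarith
    · rw [if_neg hbf, frP_nf b hb (fun i hi => hbf ⟨i, hi⟩)]
      linarith
  have hBfilter : B.filter (fun x => ∃ i, x = fringe i) = Finset.univ.image fringe := by
    ext y
    simp only [mem_filter, mem_image, mem_univ, true_and]
    constructor
    · rintro ⟨_, i, rfl⟩
      exact ⟨i, rfl⟩
    · rintro ⟨i, rfl⟩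
      exact ⟨hfrB i, i, rfl⟩
  have hsumB : ∑ x ∈ B, ((friendsIn G P x).card : ℚ) = (m:ℚ)*m - m + d := by
    rw [Finset.sum_congr rfl (fun x hx => cardP_base x hx), Finset.sum_add_distrib,
      Finset.sum_const, Finset.sum_boole, hBfilter,
      card_image_of_injective _ hfrinj, card_univ, Fintype.card_fin, nsmul_eq_mul]
    push_cast
    ring
  -- the blocking inequality, in cross-multiplied form
  have key : ∀ b, b ∈ C → b ∈ P →
      (((Fintype.card N : ℕ):ℚ)+1) * (((insert b (friendsIn G C b)).card : ℚ)
          * (∑ x ∈ insert b (friendsIn G P b), ((friendsIn G P x).card:ℚ))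
        - ((insert b (friendsIn G P b)).card : ℚ)
          * (∑ x ∈ insert b (friendsIn G C b), ((friendsIn G C x).card:ℚ)))
      < ((insert b (friendsIn G P b)).card : ℚ) * ((insert b (friendsIn G C b)).card : ℚ)
          * (((k':ℕ):ℚ) - (C.card:ℚ)) := by
    intro b hbC hbP
    have himp := hC.2 b hbC
    rw [hΓ b hbP] at himp
    unfold utilAvgEQ at himp
    have hSPP : insert b (friendsIn G P b) ⊆ P := insert_subset hbP (filter_subset _ _)
    have hSCC : insert b (friendsIn G C b) ⊆ C := insert_subset hbC (filter_subset _ _)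
    have hsp : (0:ℚ) < ((insert b (friendsIn G P b)).card : ℚ) := by
      exact_mod_cast card_pos.mpr (insert_nonempty _ _)
    have hsc : (0:ℚ) < ((insert b (friendsIn G C b)).card : ℚ) := by
      exact_mod_cast card_pos.mpr (insert_nonempty _ _)
    rw [div_lt_div_iff₀ hsp hsc] at himp
    have hAP : ∑ c ∈ insert b (friendsIn G P b), (fval G P c : ℚ)
        = (((Fintype.card N : ℕ):ℚ)+1)
            * (∑ x ∈ insert b (friendsIn G P b), ((friendsIn G P x).card:ℚ))
          - ((insert b (friendsIn G P b)).card : ℚ) * (((k':ℕ):ℚ) - 1) := by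
      rw [Finset.sum_congr rfl (fun x hx => fval_mem_eq G P x (hSPP hx)),
        Finset.sum_sub_distrib, ← Finset.mul_sum, Finset.sum_const, nsmul_eq_mul, hPcard]
    have hAC : ∑ c ∈ insert b (friendsIn G C b), (fval G C c : ℚ)
        = (((Fintype.card N : ℕ):ℚ)+1)
            * (∑ x ∈ insert b (friendsIn G C b), ((friendsIn G C x).card:ℚ))
          - ((insert b (friendsIn G C b)).card : ℚ) * ((C.card:ℚ) - 1) := by
      rw [Finset.sum_congr rfl (fun x hx => fval_mem_eq G C x (hSCC hx)),
        Finset.sum_sub_distrib, ← Finset.mul_sum, Finset.sum_const, nsmul_eq_mul]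
    rw [hAP, hAC] at himp
    linarith [himp]
  -- friends inside C for base players
  have frC_nf : ∀ b ∈ CB, (∀ i, b = fringe i → mid i ∉ C) → friendsIn G C b = CB.erase b := by
    intro b hb hnm
    have hbB : b ∈ B := (mem_inter.mp hb).2
    ext y
    simp only [friendsIn, mem_filter, mem_erase, hCBdef, mem_inter]
    constructor
    · rintro ⟨hyC, hadjy⟩
      rcases (adjB b hbB y).mp hadjy with ⟨hyB, hne⟩ | ⟨i, hbf, rfl⟩
      · exact ⟨hne, hyC, hyB⟩
      · exact absurd hyC (hnm i hbf)
    · rintro ⟨hne, hyC, hyB⟩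
      exact ⟨hyC, (adjB b hbB y).mpr (Or.inl ⟨hyB, hne⟩)⟩
  have frC_f : ∀ i, fringe i ∈ C → mid i ∈ C →
      friendsIn G C (fringe i) = insert (mid i) (CB.erase (fringe i)) := by
    intro i hfC hmC
    ext y
    simp only [friendsIn, mem_filter, mem_erase, mem_insert, hCBdef, mem_inter]
    constructor
    · rintro ⟨hyC, hadjy⟩
      rcases (adjB _ (hfrB i) y).mp hadjy with ⟨hyB, hne⟩ | ⟨j, hbf, hy⟩
      · exact Or.inr ⟨hne, hyC, hyB⟩
      · exact Or.inl (hy.trans (congrArg mid (hfrinj hbf)).symm)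
    · rintro (rfl | ⟨hne, hyC, hyB⟩)
      · exact ⟨hmC, (adjB _ (hfrB i) _).mpr (Or.inr ⟨i, rfl, rfl⟩)⟩
      · exact ⟨hyC, (adjB _ (hfrB i) y).mpr (Or.inl ⟨hyB, hne⟩)⟩
  -- bound on friends cardinalities inside C
  have hfbound : ∀ x ∈ CB, ((friendsIn G C x).card : ℚ)
      ≤ ((CB.card:ℚ) - 1) + (if ∃ i, x = fringe i ∧ mid i ∈ C then 1 else 0) := by
    intro x hx
    have hxB : x ∈ B := (mem_inter.mp hx).2
    have hxC : x ∈ C := (mem_inter.mp hx).1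
    have hcer : ((CB.erase x).card : ℚ) + 1 = (CB.card:ℚ) := by
      exact_mod_cast card_erase_add_one hx
    by_cases hxf : ∃ i, x = fringe i ∧ mid i ∈ C
    · obtain ⟨i, rfl, hmC⟩ := hxf
      rw [if_pos ⟨i, rfl, hmC⟩, frC_f i hxC hmC]
      have h1 := card_insert_le (mid i) (CB.erase (fringe i))
      have h1Q : ((insert (mid i) (CB.erase (fringe i))).card : ℚ)
          ≤ ((CB.erase (fringe i)).card : ℚ) + 1 := by exact_mod_cast h1
      linarith
    · rw [if_neg hxf]
      have hsub : friendsIn G C x ⊆ CB.erase x := by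
        intro y hy
        obtain ⟨hyC, hadjy⟩ := mem_filter.mp hy
        rcases (adjB x hxB y).mp hadjy with ⟨hyB, hne⟩ | ⟨i, hbf, rfl⟩
        · exact mem_erase.mpr ⟨hne, mem_inter.mpr ⟨hyC, hyB⟩⟩
        · exact absurd ⟨i, hbf, hyC⟩ hxf
      have h1Q : ((friendsIn G C x).card : ℚ) ≤ ((CB.erase x).card : ℚ) := by
        exact_mod_cast card_le_card hsub
      linarith
  have hfiltCB : CB.filter (fun x => ∃ i, x = fringe i ∧ mid i ∈ C) = Q.image fringe := by
    ext y
    simp only [mem_filter, mem_image, mem_univ, true_and, hQdef, hCBdef, mem_inter]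
    constructor
    · rintro ⟨⟨hyC, hyB⟩, i, rfl, hmi⟩
      exact ⟨i, ⟨hyC, hmi⟩, rfl⟩
    · rintro ⟨i, ⟨hfC, hmC⟩, rfl⟩
      exact ⟨⟨hfC, hfrB i⟩, i, rfl, hmC⟩
  have hqd : (Q.card : ℚ) ≤ (d:ℚ) := by
    have := (card_filter_le Finset.univ (fun j : Fin d => fringe j ∈ C ∧ mid j ∈ C)).trans
      (le_of_eq (by rw [card_univ, Fintype.card_fin]))
    exact_mod_cast this
  have hsumCB : ∑ x ∈ CB, ((friendsIn G C x).card : ℚ)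
      ≤ (CB.card:ℚ) * ((CB.card:ℚ) - 1) + (Q.card:ℚ) := by
    calc ∑ x ∈ CB, ((friendsIn G C x).card : ℚ)
        ≤ ∑ x ∈ CB, (((CB.card:ℚ) - 1) + (if ∃ i, x = fringe i ∧ mid i ∈ C then 1 else 0)) :=
          Finset.sum_le_sum hfbound
      _ = (CB.card:ℚ) * ((CB.card:ℚ)-1)
            + ((CB.filter (fun x => ∃ i, x = fringe i ∧ mid i ∈ C)).card : ℚ) := by
          rw [Finset.sum_add_distrib, Finset.sum_const, Finset.sum_boole, nsmul_eq_mul]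
      _ = _ := by rw [hfiltCB, card_image_of_injective _ hfrinj]
  have hq_lt : ∀ j : Fin d, mid j ∉ C → (Q.card:ℚ) ≤ (d:ℚ) - 1 := by
    intro j hj
    have hjQ : j ∉ Q := by
      rw [hQdef]
      simp only [mem_filter, mem_univ, true_and]
      exact fun h => hj h.2
    have hss : Q ⊂ Finset.univ := (Finset.ssubset_iff_of_subset (subset_univ Q)).mpr
      ⟨j, mem_univ j, hjQ⟩
    have := Finset.card_lt_card hss
    rw [card_univ, Fintype.card_fin] at this
    have : Q.card + 1 ≤ d := this
    have hQQ : (Q.card:ℚ) + 1 ≤ (d:ℚ) := by exact_mod_cast this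
    linarith
  have hmidCsub : ∀ i : Fin d, friendsIn G C (mid i) ⊆ {top, fringe i} := by
    intro i y hy
    obtain ⟨hyC, hadjy⟩ := mem_filter.mp hy
    rcases (adjM i y).mp hadjy with rfl | rfl
    · exact mem_insert_self _ _
    · exact mem_insert_of_mem (mem_singleton_self _)
  have hfm2 : ∀ i : Fin d, ((friendsIn G C (mid i)).card : ℚ) ≤ 2 := by
    intro i
    have h1 := card_le_card (hmidCsub i)
    have h2 : ({top, fringe i} : Finset N).card ≤ 2 := by
      apply le_trans (card_insert_le _ _)
      rw [card_singleton]
    exact_mod_cast le_trans h1 h2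
  have hfm1 : ∀ i : Fin d, top ∉ C → ((friendsIn G C (mid i)).card : ℚ) ≤ 1 := by
    intro i htopC
    have hsub : friendsIn G C (mid i) ⊆ {fringe i} := by
      intro y hy
      obtain ⟨hyC, hadjy⟩ := mem_filter.mp hy
      rcases (adjM i y).mp hadjy with rfl | rfl
      · exact absurd hyC htopC
      · exact mem_singleton_self _
    have := (card_le_card hsub).trans (le_of_eq (card_singleton _))
    exact_mod_cast this
  have hCBm : CB.card ≤ m := card_le_card inter_subset_right
  -- Part A: a fringe player whose mid player is in C never improves
  have hcontraA : ∀ i : Fin d, fringe i ∈ C → mid i ∈ C → False := by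
    intro i hfC hmiC
    have hbCB : fringe i ∈ CB := mem_inter.mpr ⟨hfC, hfrB i⟩
    have ht1 : 1 ≤ CB.card := card_pos.mpr ⟨_, hbCB⟩
    have ht1Q : (1:ℚ) ≤ (CB.card:ℚ) := by exact_mod_cast ht1
    have hmidCB : mid i ∉ CB := fun h => hmidB i (mem_inter.mp h).2
    have hSC : insert (fringe i) (friendsIn G C (fringe i)) = insert (mid i) CB := by
      rw [frC_f i hfC hmiC, Finset.insert_comm _ _ _, insert_erase hbCB]
    have hSP : insert (fringe i) (friendsIn G P (fringe i)) = insert (mid i) B := by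
      rw [frP_f i, Finset.insert_comm _ _ _, insert_erase (hfrB i)]
    have hk := key (fringe i) hfC (hfrP i)
    rw [hSC, hSP, hkQ] at hk
    have hspc : ((insert (mid i) B).card : ℚ) = (m:ℚ) + 1 := by
      rw [card_insert_of_notMem (hmidB i)]
      push_cast
      ring
    have hscc : ((insert (mid i) CB).card : ℚ) = (CB.card:ℚ) + 1 := by
      rw [card_insert_of_notMem hmidCB]
      push_cast
      ring
    have hsumSP : ∑ x ∈ insert (mid i) B, ((friendsIn G P x).card:ℚ)
        = (m:ℚ)*m - m + d + 2 := by
      rw [Finset.sum_insert (hmidB i), hsumB, cardP_mid i]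
      ring
    have hsumSC : ∑ x ∈ insert (mid i) CB, ((friendsIn G C x).card:ℚ)
        = ((friendsIn G C (mid i)).card:ℚ) + ∑ x ∈ CB, ((friendsIn G C x).card:ℚ) :=
      Finset.sum_insert hmidCB
    rw [hspc, hscc, hsumSP, hsumSC] at hk
    have hcC : (CB.card:ℚ) + 1 ≤ (C.card:ℚ) := by
      have hsub : insert (mid i) CB ⊆ C := insert_subset hmiC inter_subset_left
      have := card_le_card hsub
      rw [card_insert_of_notMem hmidCB] at this
      exact_mod_cast this
    rcases lt_or_eq_of_le hCBm with hlt | heq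
    · have ht2Q : (CB.card:ℚ) ≤ (m:ℚ) - 1 := by
        have : CB.card + 1 ≤ m := hlt
        have h := (Nat.cast_le (α := ℚ)).mpr this
        push_cast at h
        linarith
      have harith := arith_A1 (d:ℚ) (m:ℚ) (CB.card:ℚ) (Q.card:ℚ) ((Fintype.card N : ℕ):ℚ)
        (((friendsIn G C (mid i)).card:ℚ) + ∑ x ∈ CB, ((friendsIn G C x).card:ℚ))
        (C.card:ℚ) ((friendsIn G C (mid i)).card:ℚ)
        hdQ hdmQ hnQ ht1Q ht2Q hqd (hfm2 i) (by linarith [hsumCB]) hcC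
      linarith
    · have hCBeq : CB = B := eq_of_subset_of_card_le inter_subset_right (le_of_eq heq.symm)
      have hBC : B ⊆ C := by
        intro y hy
        have : y ∈ CB := hCBeq ▸ hy
        exact (mem_inter.mp this).1
      have hmQ : (CB.card : ℚ) = (m:ℚ) := by exact_mod_cast heq
      by_cases hall : top ∈ C ∧ ∀ j, mid j ∈ C
      · have hsub : B ∪ insert top (Finset.univ.image mid) ⊆ C := by
          apply union_subset hBC
          apply insert_subset hall.1
          intro y hy
          obtain ⟨j, _, rfl⟩ := mem_image.mp hy
          exact hall.2 j
        have hdisj : Disjoint B (insert top (Finset.univ.image mid)) := sdiff_disjoint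
        have hcard : k' ≤ C.card := by
          have h1 := card_le_card hsub
          rw [card_union_of_disjoint hdisj, hIcard] at h1
          omega
        have hcardQ : (m:ℚ) + d + 1 ≤ (C.card:ℚ) := by
          have := (Nat.cast_le (α := ℚ)).mpr hcard
          rw [hkQ] at this
          linarith
      -- LHS of hk nonneg, RHS nonpos
        have hScb : ((friendsIn G C (mid i)).card:ℚ) + ∑ x ∈ CB, ((friendsIn G C x).card:ℚ)
            ≤ (m:ℚ)*m - m + d + 2 := by
          have := hsumCB
          rw [hmQ] at this
          have h2 := hfm2 i
          nlinarith
        have hn0 : (0:ℚ) ≤ ((Fintype.card N : ℕ):ℚ) + 1 := by positivity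
        rw [hmQ] at hk
        have hmm1 : (0:ℚ) ≤ ((m:ℚ)+1) := by linarith
        have hdiff : (0:ℚ) ≤ ((m:ℚ)*m - m + d + 2)
            - (((friendsIn G C (mid i)).card:ℚ) + ∑ x ∈ CB, ((friendsIn G C x).card:ℚ)) := by
          linarith [hScb]
        have h3 := mul_nonneg hn0 (mul_nonneg hmm1 hdiff)
        have h4 : (0:ℚ) ≤ ((m:ℚ)+1)*(((m:ℚ))+1)*((C.card:ℚ) - ((m:ℚ)+d+1)) :=
          mul_nonneg (mul_nonneg hmm1 hmm1) (by linarith)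
        linarith [hk, h3, h4]
      · have hScb : ((friendsIn G C (mid i)).card:ℚ) + ∑ x ∈ CB, ((friendsIn G C x).card:ℚ)
            ≤ (m:ℚ)*((m:ℚ)-1) + d + 1 := by
          have hs := hsumCB
          rw [hmQ] at hs
          by_cases htc : top ∈ C
          · have : ∃ j, mid j ∉ C := by
              by_contra hcon
              push_neg at hcon
              exact hall ⟨htc, hcon⟩
            obtain ⟨j, hj⟩ := this
            have := hq_lt j hj
            have h2 := hfm2 i
            linarith
          · have h1 := hfm1 i htc
            linarith
        have harith := arith_A2 (d:ℚ) (m:ℚ) ((Fintype.card N : ℕ):ℚ)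
          (((friendsIn G C (mid i)).card:ℚ) + ∑ x ∈ CB, ((friendsIn G C x).card:ℚ))
          (C.card:ℚ) hdQ hdmQ hnQ hScb (by linarith [hcC, hmQ])
        rw [hmQ] at hk
        linarith
  -- Part B: a non-fringe base player in C never improves
  have hcontraNF : ∀ b ∈ B, b ∈ C → (∀ i, b ≠ fringe i) → False := by
    intro b hbB hbC hbnf
    have hbCB : b ∈ CB := mem_inter.mpr ⟨hbC, hbB⟩
    have ht1 : 1 ≤ CB.card := card_pos.mpr ⟨_, hbCB⟩
    have ht1Q : (1:ℚ) ≤ (CB.card:ℚ) := by exact_mod_cast ht1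
    have hSC : insert b (friendsIn G C b) = CB := by
      rw [frC_nf b hbCB (fun i hi => absurd hi (hbnf i)), insert_erase hbCB]
    have hSP : insert b (friendsIn G P b) = B := by
      rw [frP_nf b hbB hbnf, insert_erase hbB]
    have hk := key b hbC (hBsub hbB)
    rw [hSC, hSP, hkQ, hsumB] at hk
    have hcC1 : (1:ℚ) ≤ (C.card:ℚ) := by
      have := card_pos.mpr hC.1
      exact_mod_cast this
    rcases lt_or_eq_of_le hCBm with hlt | heq
    · have ht2Q : (CB.card:ℚ) ≤ (m:ℚ) - 1 := by
        have : CB.card + 1 ≤ m := hlt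
        have h := (Nat.cast_le (α := ℚ)).mpr this
        push_cast at h
        linarith
      have harith := arith_B1 (d:ℚ) (m:ℚ) (CB.card:ℚ) (Q.card:ℚ) ((Fintype.card N : ℕ):ℚ)
        (∑ x ∈ CB, ((friendsIn G C x).card:ℚ)) (C.card:ℚ)
        hdQ hdmQ hnQ ht1Q ht2Q hqd hsumCB hcC1
      linarith
    · have hCBeq : CB = B := eq_of_subset_of_card_le inter_subset_right (le_of_eq heq.symm)
      have hBC : B ⊆ C := by
        intro y hy
        have : y ∈ CB := hCBeq ▸ hy
        exact (mem_inter.mp this).1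
      have hmQ : (CB.card : ℚ) = (m:ℚ) := by exact_mod_cast heq
      by_cases hallm : ∀ j, mid j ∈ C
      · exact hcontraA ⟨0, hd⟩ (hBC (hfrB _)) (hallm _)
      · push_neg at hallm
        obtain ⟨j, hj⟩ := hallm
        have hq1 := hq_lt j hj
        have hcCm : (m:ℚ) ≤ (C.card:ℚ) := by
          have := card_le_card hBC
          exact_mod_cast this
        have hs := hsumCB
        rw [hmQ] at hs
        have harith := arith_B2 (d:ℚ) (m:ℚ) (Q.card:ℚ) ((Fintype.card N : ℕ):ℚ)
          (∑ x ∈ CB, ((friendsIn G C x).card:ℚ)) (C.card:ℚ)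
          hdQ hdmQ hnQ hq1 hs hcCm
        rw [hmQ] at hk
        linarith
  -- Part C: a fringe player in C never improves
  have hcontraF : ∀ i : Fin d, fringe i ∈ C → False := by
    intro i hfC
    by_cases hmiC : mid i ∈ C
    · exact hcontraA i hfC hmiC
    have hbCB : fringe i ∈ CB := mem_inter.mpr ⟨hfC, hfrB i⟩
    have ht1 : 1 ≤ CB.card := card_pos.mpr ⟨_, hbCB⟩
    have ht1Q : (1:ℚ) ≤ (CB.card:ℚ) := by exact_mod_cast ht1
    have hSC : insert (fringe i) (friendsIn G C (fringe i)) = CB := by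
      rw [frC_nf _ hbCB (fun j hj => by rw [congrArg mid (hfrinj hj.symm)]; exact hmiC),
        insert_erase hbCB]
    have hSP : insert (fringe i) (friendsIn G P (fringe i)) = insert (mid i) B := by
      rw [frP_f i, Finset.insert_comm _ _ _, insert_erase (hfrB i)]
    have hk := key (fringe i) hfC (hfrP i)
    rw [hSC, hSP, hkQ] at hk
    have hspc : ((insert (mid i) B).card : ℚ) = (m:ℚ) + 1 := by
      rw [card_insert_of_notMem (hmidB i)]
      push_cast
      ring
    have hsumSP : ∑ x ∈ insert (mid i) B, ((friendsIn G P x).card:ℚ)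
        = (m:ℚ)*m - m + d + 2 := by
      rw [Finset.sum_insert (hmidB i), hsumB, cardP_mid i]
      ring
    rw [hspc, hsumSP] at hk
    rcases lt_or_eq_of_le hCBm with hlt | heq
    · have ht2Q : (CB.card:ℚ) ≤ (m:ℚ) - 1 := by
        have : CB.card + 1 ≤ m := hlt
        have h := (Nat.cast_le (α := ℚ)).mpr this
        push_cast at h
        linarith
      have hcC : (CB.card:ℚ) ≤ (C.card:ℚ) := by
        exact_mod_cast card_le_card inter_subset_left
      have harith := arith_C (d:ℚ) (m:ℚ) (CB.card:ℚ) (Q.card:ℚ) ((Fintype.card N : ℕ):ℚ)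
        (∑ x ∈ CB, ((friendsIn G C x).card:ℚ)) (C.card:ℚ)
        hdQ hdmQ hnQ ht1Q ht2Q (hq_lt i hmiC) hsumCB hcC
      linarith
    · have hCBeq : CB = B := eq_of_subset_of_card_le inter_subset_right (le_of_eq heq.symm)
      have hBC : B ⊆ C := by
        intro y hy
        have : y ∈ CB := hCBeq ▸ hy
        exact (mem_inter.mp this).1
      have hexNF : ∃ y ∈ B, ∀ j, y ≠ fringe j := by
        by_contra hcon
        push_neg at hcon
        have hsub : B ⊆ Finset.univ.image fringe := by
          intro y hy
          obtain ⟨j, hjy⟩ := hcon y hy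
          exact mem_image.mpr ⟨j, mem_univ _, hjy.symm⟩
        have h1 := card_le_card hsub
        rw [card_image_of_injective _ hfrinj, card_univ, Fintype.card_fin] at h1
        omega
      obtain ⟨y, hyB, hynf⟩ := hexNF
      exact hcontraNF y hyB (hBC hyB) hynf
  -- conclusion
  by_cases hxf : ∃ i, x0 = fringe i
  · obtain ⟨i, rfl⟩ := hxf
    exact hcontraF i hx0C
  · push_neg at hxf
    exact hcontraNF x0 hx0B hx0C hxf
end

section
/- Consider an altruistic hedonic game under avg-EQ utilities on n players whose network of friends contains a pinched (d,k')-dome gadget on a player set P, where d ≥ 1, k' > 2d+3, and n ≥ k'·(d+1), and such that no player of P other than the top player p* has a friend outside P. Let Γ be a coalition structure containing P as a coalition. If a coalition C blocks Γ, then C contains no player of the base clique of the gadget (in particular, no fringe player). -/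
open Finset
open scoped Classical

section AHGDefs

variable {N : Type*} [Fintype N] [DecidableEq N]

/-- The base clique of a pinched `(d,k')`-dome gadget on `P` with top player `top`
and (unique) mid player `mid`. -/
noncomputable def pdomeBase (P : Finset N) (top mid : N) : Finset N :=
  P \ {top, mid}

/-- `P` carries a pinched `(d,k')`-dome gadget of the graph `G`, with top player `top`,
the unique mid player `mid` (obtained by identifying the `d` mid players) and fringe
players `fringe i`. -/
structure IsPinchedDomeGadget (G : SimpleGraph N) (d k' : ℕ) (P : Finset N) (top mid : N)
    (fringe : Fin d → N) : Prop where
  card_eq : P.card = k' - d + 1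
  top_mem : top ∈ P
  mid_mem : mid ∈ P
  mid_ne_top : mid ≠ top
  fringe_mem : ∀ i, fringe i ∈ pdomeBase P top mid
  fringe_inj : Function.Injective fringe
  adj_iff : ∀ x ∈ P, ∀ y ∈ P, (G.Adj x y ↔
    ((x = top ∧ y = mid) ∨ (y = top ∧ x = mid) ∨
     (x ∈ pdomeBase P top mid ∧ y ∈ pdomeBase P top mid ∧ x ≠ y) ∨
     (x = mid ∧ ∃ i, y = fringe i) ∨ (y = mid ∧ ∃ i, x = fringe i)))

/-- `P` carries a pinched `(d,k')`-dome gadget with top player `top`. -/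
def HasPinchedDomeGadget (G : SimpleGraph N) (d k' : ℕ) (P : Finset N) (top : N) : Prop :=
  ∃ (mid : N) (fringe : Fin d → N), IsPinchedDomeGadget G d k' P top mid fringe
end AHGDefs

/-!
Writing `val_c(D) = (n + 1)·|F_c ∩ D| - |D| + 1`, the avg-EQ utility of `i` in `D` is `n + 1`
times the average number of friends in `D` of the players of `(F_i ∩ D) ∪ {i}`, minus `|D| - 1`.
As `n + 1 > 2 (|P| - 1)`, a player of `P` gains by moving to `C` only if that average drops by
less than `1/2`. For a non-fringe base player this forces `C` to contain the base and `mid`; the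
average is then unchanged, so `C` must be smaller than `P`, i.e. `C = base ∪ {mid}`. There every
fringe player loses, because `mid` has lost its friend `top`. If all base players in `C` are
fringe players, there are at most `d ≤ b - 3` of them (`b` the size of the base), and the
average of a fringe player drops from about `b - 2` to about `d`.
-/

section AvgEQ

variable {N : Type*} [DecidableEq N] (G : SimpleGraph N)

-- `(D ∩ F_i) ∪ {i}`: the players whose valuations `i` averages under avg-EQ.
noncomputable def closedFriendsIn (D : Finset N) (i : N) : Finset N :=
  insert i (friendsIn G D i)

noncomputable def friendDegreeSum (D S : Finset N) : ℤ :=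
  ∑ c ∈ S, ((friendsIn G D c).card : ℤ)

lemma closedFriendsIn_subset {D : Finset N} {i : N} (hi : i ∈ D) :
    closedFriendsIn G D i ⊆ D :=
  insert_subset hi (filter_subset _ _)

lemma card_closedFriendsIn (D : Finset N) (i : N) :
    (closedFriendsIn G D i).card = (friendsIn G D i).card + 1 :=
  card_insert_of_notMem (by simp [friendsIn])

lemma fval_eq [Fintype N] {D : Finset N} {c : N} (hc : c ∈ D) :
    fval G D c = ((Fintype.card N : ℤ) + 1) * (friendsIn G D c).card - D.card + 1 := by
  have hEnemies : (D.filter fun j => ¬ G.Adj c j ∧ j ≠ c) = D \ closedFriendsIn G D c := by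
    ext j
    simp only [closedFriendsIn, friendsIn, mem_filter, mem_sdiff, mem_insert]
    tauto
  have hcard := card_sdiff_add_card_eq_card (closedFriendsIn_subset G hc)
  rw [card_closedFriendsIn] at hcard
  rw [fval, hEnemies, ← hcard]
  push_cast
  ring

lemma sum_fval_eq [Fintype N] {D S : Finset N} (hS : S ⊆ D) :
    ∑ c ∈ S, fval G D c =
      ((Fintype.card N : ℤ) + 1) * friendDegreeSum G D S - S.card * ((D.card : ℤ) - 1) := by
  rw [sum_congr rfl fun c hc => fval_eq G (hS hc), friendDegreeSum, mul_sum]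
  simp only [sum_add_distrib, sum_sub_distrib, sum_const, nsmul_eq_mul]
  ring

lemma utilAvgEQ_lt_iff [Fintype N] {D D' : Finset N} {y : N} (hy : y ∈ D) (hy' : y ∈ D') :
    utilAvgEQ G D y < utilAvgEQ G D' y ↔
      ((Fintype.card N : ℤ) + 1) *
          (friendDegreeSum G D (closedFriendsIn G D y) * (closedFriendsIn G D' y).card -
            friendDegreeSum G D' (closedFriendsIn G D' y) * (closedFriendsIn G D y).card) <
        (closedFriendsIn G D y).card * (closedFriendsIn G D' y).card *
          ((D.card : ℤ) - D'.card) := by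
  have hpos : ∀ E : Finset N, (0 : ℚ) < (closedFriendsIn G E y).card := fun E => by
    exact_mod_cast (insert_nonempty _ _).card_pos
  change (∑ c ∈ closedFriendsIn G D y, (fval G D c : ℚ)) / (closedFriendsIn G D y).card <
      (∑ c ∈ closedFriendsIn G D' y, (fval G D' c : ℚ)) / (closedFriendsIn G D' y).card ↔ _
  rw [div_lt_div_iff₀ (hpos D) (hpos D'), ← Int.cast_sum, ← Int.cast_sum,
    ← Int.cast_natCast (R := ℚ) (closedFriendsIn G D y).card,
    ← Int.cast_natCast (R := ℚ) (closedFriendsIn G D' y).card, ← Int.cast_mul,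
    ← Int.cast_mul, Int.cast_lt, sum_fval_eq G (closedFriendsIn_subset G hy),
    sum_fval_eq G (closedFriendsIn_subset G hy')]
  constructor <;> intro h <;> linarith

end AvgEQ

/- In the next three lemmas `m = n + 1`, `b`, `s` and `c` are the sizes of the base, of its part
in `C` and of `C`; `M` is the number of fringe players in `C` if `mid ∈ C` and `0` otherwise, and
`Fc` is the friend-degree sum in `C` of the closed neighbourhood of a fringe player. The
hypothesis `h` is the blocking inequality in the cross-multiplied form of `utilAvgEQ_lt_iff`. -/
lemma nonfringe_blocking_arith {m b d s c M : ℤ} (hs : 1 ≤ s) (hsb : s ≤ b) (hM : 0 ≤ M)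
    (hMd : M ≤ d) (hsc : s ≤ c) (hb : d + 3 ≤ b) (hm : 2 * b + 2 * d + 3 ≤ m)
    (h : m * ((b * (b - 1) + d) * s - (s * (s - 1) + M) * b) < b * s * (b + 2 - c)) :
    s = b ∧ M = d ∧ c ≤ b + 1 := by
  obtain rfl : s = b := by
    by_contra hne
    have hgap : (b - s) * (s * b - d) ≤ (b * (b - 1) + d) * s - (s * (s - 1) + M) * b := by
      nlinarith
    have hsbd : 3 * (s * b) ≤ m * (s * b - d) := by
      nlinarith [mul_le_mul_of_nonneg_left hs (by omega : (0 : ℤ) ≤ b)]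
    have : b * s * (b + 2 - c) ≤ m * ((b - s) * (s * b - d)) := by
      nlinarith [mul_le_mul_of_nonneg_left hsbd (by omega : (0 : ℤ) ≤ b - s),
        mul_nonneg (mul_nonneg (by omega : (0 : ℤ) ≤ b) (by omega : (0 : ℤ) ≤ s))
          (by omega : (0 : ℤ) ≤ 3 * (b - s) - (b + 2 - c))]
    nlinarith [mul_le_mul_of_nonneg_left hgap (by omega : (0 : ℤ) ≤ m)]
  have h' : m * (d - M) < s * (s + 2 - c) := by
    refine lt_of_mul_lt_mul_left ?_ (by omega : (0 : ℤ) ≤ s)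
    linarith
  obtain rfl : M = d := by nlinarith
  exact ⟨rfl, rfl, by nlinarith⟩

lemma fringe_blocking_arith_of_mid_mem {m b d s c Fc : ℤ} (hs : 1 ≤ s) (hsd : s ≤ d)
    (hb : d + 3 ≤ b) (hm : 2 * b + 2 * d + 3 ≤ m) (hsc : s + 1 ≤ c)
    (hFc : Fc ≤ s * s + s + 1)
    (h : m * ((b * (b - 1) + 2 * d + 1) * (s + 1) - Fc * (b + 1)) <
      (b + 1) * (s + 1) * (b + 2 - c)) : False := by
  have hX : b * (b - 2) ≤ (b * (b - 1) + 2 * d + 1) * (s + 1) - Fc * (b + 1) := by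
    have hs' : 0 ≤ b * b - 2 * b + 2 * d - (b + 1) * s := by
      nlinarith [mul_nonneg (by omega : (0 : ℤ) ≤ b + 1) (by omega : (0 : ℤ) ≤ d - s)]
    nlinarith [mul_le_mul_of_nonneg_right hFc (by omega : (0 : ℤ) ≤ b + 1),
      mul_nonneg (by omega : (0 : ℤ) ≤ s) hs']
  have hAMGM : 4 * ((s + 1) * (b + 1 - s)) ≤ (b + 2) ^ 2 := by nlinarith [sq_nonneg (b - 2 * s)]
  have hmb : (b + 1) * (b + 2) ^ 2 ≤ 4 * m * (b * (b - 2)) := by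
    nlinarith [mul_nonneg (by omega : (0 : ℤ) ≤ b - 4)
        (mul_nonneg (by omega : (0 : ℤ) ≤ b) (by omega : (0 : ℤ) ≤ b)),
      mul_nonneg (by omega : (0 : ℤ) ≤ m - 2 * b - 4)
        (mul_nonneg (by omega : (0 : ℤ) ≤ b) (by omega : (0 : ℤ) ≤ b - 2))]
  nlinarith [mul_le_mul_of_nonneg_left hX (by omega : (0 : ℤ) ≤ m),
    mul_le_mul_of_nonneg_left hAMGM (by omega : (0 : ℤ) ≤ b + 1),
    mul_nonneg (mul_nonneg (by omega : (0 : ℤ) ≤ b + 1) (by omega : (0 : ℤ) ≤ s + 1))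
      (by omega : (0 : ℤ) ≤ c - s - 1)]

lemma fringe_blocking_arith_of_mid_notMem {m b d s c : ℤ} (hs : 1 ≤ s) (hsd : s ≤ d)
    (hb : d + 3 ≤ b) (hm : 2 * b + 2 * d + 3 ≤ m) (hsc : s ≤ c)
    (h : m * ((b * (b - 1) + 2 * d + 1) * s - s * (s - 1) * (b + 1)) <
      (b + 1) * s * (b + 2 - c)) : False := by
  have hY : 3 * b + d + 2 ≤ b * (b - 1) + 2 * d + 1 - (s - 1) * (b + 1) := by
    nlinarith [mul_nonneg (by omega : (0 : ℤ) ≤ b + 1) (by omega : (0 : ℤ) ≤ d - s),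
      mul_nonneg (by omega : (0 : ℤ) ≤ b) (by omega : (0 : ℤ) ≤ b - d - 3)]
  have hmb : (b + 1) * (b + 1) ≤ m * (3 * b + d + 2) := by nlinarith
  nlinarith [mul_le_mul_of_nonneg_left hY
      (mul_nonneg (by omega : (0 : ℤ) ≤ m) (by omega : (0 : ℤ) ≤ s)),
    mul_le_mul_of_nonneg_left hmb (by omega : (0 : ℤ) ≤ s),
    mul_nonneg (mul_nonneg (by omega : (0 : ℤ) ≤ b + 1) (by omega : (0 : ℤ) ≤ s))
      (by omega : (0 : ℤ) ≤ c - 1)]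

section PinchedDome

variable {N : Type*} [DecidableEq N]

lemma mem_pdomeBase {P : Finset N} {top mid c : N} :
    c ∈ pdomeBase P top mid ↔ c ∈ P ∧ c ≠ top ∧ c ≠ mid := by
  simp [pdomeBase]

lemma pdomeBase_subset (P : Finset N) (top mid : N) : pdomeBase P top mid ⊆ P :=
  sdiff_subset

lemma mid_notMem_pdomeBase (P : Finset N) (top mid : N) : mid ∉ pdomeBase P top mid := by
  simp [mem_pdomeBase]

def HasNoOutsideFriendsExcept (G : SimpleGraph N) (P : Finset N) (top : N) : Prop :=
  ∀ x ∈ P, x ≠ top → ∀ y : N, G.Adj x y → y ∈ P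

namespace IsPinchedDomeGadget

variable {G : SimpleGraph N} {d k' : ℕ} {P : Finset N} {top mid : N} {fringe : Fin d → N}

lemma fringe_subset (hg : IsPinchedDomeGadget G d k' P top mid fringe) :
    univ.image fringe ⊆ pdomeBase P top mid := by
  simpa [image_subset_iff] using hg.fringe_mem

lemma card_fringe (hg : IsPinchedDomeGadget G d k' P top mid fringe) :
    (univ.image fringe).card = d := by
  rw [card_image_of_injective _ hg.fringe_inj, card_univ, Fintype.card_fin]

lemma card_eq_card_pdomeBase_add_two (hg : IsPinchedDomeGadget G d k' P top mid fringe) :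
    P.card = (pdomeBase P top mid).card + 2 := by
  have hsub : ({top, mid} : Finset N) ⊆ P := insert_subset hg.top_mem (by simpa using hg.mid_mem)
  rw [← card_sdiff_add_card_eq_card hsub, card_pair hg.mid_ne_top.symm]
  rfl

lemma card_pdomeBase_add (hg : IsPinchedDomeGadget G d k' P top mid fringe) :
    (pdomeBase P top mid).card + d + 1 = k' := by
  have := hg.card_eq
  rw [hg.card_eq_card_pdomeBase_add_two] at this
  omega

lemma adj_iff_of_mem_pdomeBase (hg : IsPinchedDomeGadget G d k' P top mid fringe)
    (hout : HasNoOutsideFriendsExcept G P top) {c y : N}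
    (hc : c ∈ pdomeBase P top mid) :
    G.Adj c y ↔
      y ∈ pdomeBase P top mid ∧ y ≠ c ∨ c ∈ univ.image fringe ∧ y = mid := by
  obtain ⟨hcP, hct, hcm⟩ := mem_pdomeBase.1 hc
  by_cases hyP : y ∈ P
  · rw [hg.adj_iff c hcP y hyP]
    simp only [mem_image, mem_univ, true_and]
    aesop
  · have hyB : y ∉ pdomeBase P top mid := fun h => hyP (pdomeBase_subset P top mid h)
    have hym : y ≠ mid := fun h => hyP (h ▸ hg.mid_mem)
    exact iff_of_false (fun h => hyP (hout c hcP hct y h)) (by tauto)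

lemma adj_mid_iff (hg : IsPinchedDomeGadget G d k' P top mid fringe)
    (hout : HasNoOutsideFriendsExcept G P top) {y : N} :
    G.Adj mid y ↔ y = top ∨ y ∈ univ.image fringe := by
  by_cases hyP : y ∈ P
  · rw [hg.adj_iff mid hg.mid_mem y hyP]
    have hmidF : ∀ i, mid ≠ fringe i := fun i h =>
      mid_notMem_pdomeBase P top mid (h ▸ hg.fringe_mem i)
    have hmt := hg.mid_ne_top
    simp only [mem_image, mem_univ, true_and, mem_pdomeBase]
    aesop
  · have hyF : y ∉ univ.image fringe := fun h =>
      hyP (pdomeBase_subset P top mid (hg.fringe_subset h))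
    have hyt : y ≠ top := fun h => hyP (h ▸ hg.top_mem)
    exact iff_of_false (fun h => hyP (hout mid hg.mid_mem hg.mid_ne_top y h)) (by tauto)

lemma friendsIn_mid (hg : IsPinchedDomeGadget G d k' P top mid fringe)
    (hout : HasNoOutsideFriendsExcept G P top) (D : Finset N) :
    friendsIn G D mid = D ∩ insert top (univ.image fringe) := by
  ext y
  simp only [friendsIn, mem_filter, mem_inter, mem_insert, hg.adj_mid_iff hout]

lemma card_friendsIn_mid_le (hg : IsPinchedDomeGadget G d k' P top mid fringe)
    (hout : HasNoOutsideFriendsExcept G P top) (D : Finset N) :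
    (friendsIn G D mid).card ≤ (univ.image fringe ∩ D).card + if top ∈ D then 1 else 0 := by
  rw [hg.friendsIn_mid hout, inter_comm, inter_insert]
  split_ifs
  · exact card_insert_le _ _
  · simp

lemma closedFriendsIn_of_mem_pdomeBase (hg : IsPinchedDomeGadget G d k' P top mid fringe)
    (hout : HasNoOutsideFriendsExcept G P top) {D : Finset N} {c : N}
    (hc : c ∈ pdomeBase P top mid) (hcD : c ∈ D) :
    closedFriendsIn G D c = if c ∈ univ.image fringe ∧ mid ∈ D
      then insert mid (pdomeBase P top mid ∩ D) else pdomeBase P top mid ∩ D := by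
  ext y
  simp only [closedFriendsIn, friendsIn, mem_insert, mem_filter,
    hg.adj_iff_of_mem_pdomeBase hout hc]
  split_ifs with h
  · simp only [mem_insert, mem_inter]
    grind
  · simp only [mem_inter]
    grind

lemma card_friendsIn_of_mem_pdomeBase (hg : IsPinchedDomeGadget G d k' P top mid fringe)
    (hout : HasNoOutsideFriendsExcept G P top) {D : Finset N} {c : N}
    (hc : c ∈ pdomeBase P top mid) (hcD : c ∈ D) :
    ((friendsIn G D c).card : ℤ) = (pdomeBase P top mid ∩ D).card - 1 +
      if c ∈ univ.image fringe ∧ mid ∈ D then 1 else 0 := by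
  have hcard := card_closedFriendsIn G D c
  rw [hg.closedFriendsIn_of_mem_pdomeBase hout hc hcD] at hcard
  split_ifs at hcard ⊢
  · rw [card_insert_of_notMem fun h => mid_notMem_pdomeBase P top mid (mem_inter.1 h).1] at hcard
    omega
  · omega

lemma friendDegreeSum_pdomeBase_inter (hg : IsPinchedDomeGadget G d k' P top mid fringe)
    (hout : HasNoOutsideFriendsExcept G P top) (D : Finset N) :
    friendDegreeSum G D (pdomeBase P top mid ∩ D) =
      (pdomeBase P top mid ∩ D).card * ((pdomeBase P top mid ∩ D).card - 1 : ℤ) +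
        if mid ∈ D then ((univ.image fringe ∩ D).card : ℤ) else 0 := by
  rw [friendDegreeSum, sum_congr rfl fun c hc =>
    hg.card_friendsIn_of_mem_pdomeBase hout (mem_inter.1 hc).1 (mem_inter.1 hc).2,
    sum_add_distrib, sum_const, nsmul_eq_mul]
  congr 1
  split_ifs with hmD
  · simp only [hmD, and_true]
    rw [sum_boole]
    congr 2
    ext c
    simp only [mem_filter, mem_inter]
    exact ⟨fun h => ⟨h.2, h.1.2⟩, fun h => ⟨⟨hg.fringe_subset h.1, h.2⟩, h.1⟩⟩
  · simp [hmD]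

lemma friendDegreeSum_insert_mid_pdomeBase_inter
    (hg : IsPinchedDomeGadget G d k' P top mid fringe) (hout : HasNoOutsideFriendsExcept G P top)
    {D : Finset N} (hmD : mid ∈ D) :
    friendDegreeSum G D (insert mid (pdomeBase P top mid ∩ D)) =
      (pdomeBase P top mid ∩ D).card * ((pdomeBase P top mid ∩ D).card - 1 : ℤ) +
        (univ.image fringe ∩ D).card + (friendsIn G D mid).card := by
  rw [friendDegreeSum, sum_insert fun h => mid_notMem_pdomeBase P top mid (mem_inter.1 h).1,
    ← friendDegreeSum, hg.friendDegreeSum_pdomeBase_inter hout, if_pos hmD]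
  ring

lemma closedFriendsIn_gadget_of_mem_pdomeBase
    (hg : IsPinchedDomeGadget G d k' P top mid fringe) (hout : HasNoOutsideFriendsExcept G P top)
    {y : N} (hy : y ∈ pdomeBase P top mid) :
    closedFriendsIn G P y = if y ∈ univ.image fringe
      then insert mid (pdomeBase P top mid) else pdomeBase P top mid := by
  rw [hg.closedFriendsIn_of_mem_pdomeBase hout hy (pdomeBase_subset P top mid hy),
    inter_eq_left.2 (pdomeBase_subset P top mid)]
  simp [hg.mid_mem]

lemma utilAvgEQ_lt_iff_of_notMem_fringe [Fintype N]
    (hg : IsPinchedDomeGadget G d k' P top mid fringe) (hout : HasNoOutsideFriendsExcept G P top)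
    {C : Finset N} {y : N} (hy : y ∈ pdomeBase P top mid) (hyF : y ∉ univ.image fringe)
    (hyC : y ∈ C) :
    utilAvgEQ G P y < utilAvgEQ G C y ↔
      ((Fintype.card N : ℤ) + 1) *
          (((pdomeBase P top mid).card * ((pdomeBase P top mid).card - 1) + d) *
              (closedFriendsIn G C y).card -
            friendDegreeSum G C (closedFriendsIn G C y) * (pdomeBase P top mid).card) <
        (pdomeBase P top mid).card * (closedFriendsIn G C y).card *
          ((pdomeBase P top mid).card + 2 - C.card) := by
  have h := hg.friendDegreeSum_pdomeBase_inter hout P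
  rw [inter_eq_left.2 (pdomeBase_subset P top mid),
    inter_eq_left.2 (hg.fringe_subset.trans (pdomeBase_subset P top mid)), if_pos hg.mid_mem,
    hg.card_fringe] at h
  rw [utilAvgEQ_lt_iff G (pdomeBase_subset P top mid hy) hyC,
    hg.closedFriendsIn_gadget_of_mem_pdomeBase hout hy, if_neg hyF, h,
    hg.card_eq_card_pdomeBase_add_two]
  push_cast
  rfl

lemma utilAvgEQ_lt_iff_of_mem_fringe [Fintype N]
    (hg : IsPinchedDomeGadget G d k' P top mid fringe) (hout : HasNoOutsideFriendsExcept G P top)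
    {C : Finset N} {y : N} (hy : y ∈ univ.image fringe) (hyC : y ∈ C) :
    utilAvgEQ G P y < utilAvgEQ G C y ↔
      ((Fintype.card N : ℤ) + 1) *
          (((pdomeBase P top mid).card * ((pdomeBase P top mid).card - 1) + 2 * d + 1) *
              (closedFriendsIn G C y).card -
            friendDegreeSum G C (closedFriendsIn G C y) * ((pdomeBase P top mid).card + 1)) <
        ((pdomeBase P top mid).card + 1) * (closedFriendsIn G C y).card *
          ((pdomeBase P top mid).card + 2 - C.card) := by
  have hFP : univ.image fringe ⊆ P := hg.fringe_subset.trans (pdomeBase_subset P top mid)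
  have htop : top ∉ univ.image fringe := fun h => by
    simpa [mem_pdomeBase] using hg.fringe_subset h
  have h := hg.friendDegreeSum_insert_mid_pdomeBase_inter hout hg.mid_mem
  rw [inter_eq_left.2 (pdomeBase_subset P top mid), inter_eq_left.2 hFP, hg.card_fringe,
    hg.friendsIn_mid hout, inter_eq_right.2 (insert_subset hg.top_mem hFP),
    card_insert_of_notMem htop, hg.card_fringe] at h
  rw [utilAvgEQ_lt_iff G (pdomeBase_subset P top mid (hg.fringe_subset hy)) hyC,
    hg.closedFriendsIn_gadget_of_mem_pdomeBase hout (hg.fringe_subset hy), if_pos hy, h,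
    card_insert_of_notMem (mid_notMem_pdomeBase P top mid), hg.card_eq_card_pdomeBase_add_two]
  push_cast
  constructor <;> intro h <;> linarith

lemma eq_insert_mid_of_utilAvgEQ_lt [Fintype N]
    (hg : IsPinchedDomeGadget G d k' P top mid fringe) (hout : HasNoOutsideFriendsExcept G P top)
    (hd : 1 ≤ d) (hb : d + 3 ≤ (pdomeBase P top mid).card)
    (hn : 2 * (pdomeBase P top mid).card + 2 * d + 2 ≤ Fintype.card N)
    {C : Finset N} {y : N} (hy : y ∈ pdomeBase P top mid) (hyF : y ∉ univ.image fringe)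
    (hyC : y ∈ C) (hlt : utilAvgEQ G P y < utilAvgEQ G C y) :
    C = insert mid (pdomeBase P top mid) := by
  have hCy : closedFriendsIn G C y = pdomeBase P top mid ∩ C := by
    rw [hg.closedFriendsIn_of_mem_pdomeBase hout hy hyC, if_neg (by tauto)]
  rw [hg.utilAvgEQ_lt_iff_of_notMem_fringe hout hy hyF hyC, hCy,
    hg.friendDegreeSum_pdomeBase_inter hout] at hlt
  have hs : 1 ≤ (pdomeBase P top mid ∩ C).card := card_pos.2 ⟨y, mem_inter.2 ⟨hy, hyC⟩⟩
  have hsB : (pdomeBase P top mid ∩ C).card ≤ (pdomeBase P top mid).card :=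
    card_le_card inter_subset_left
  have hsC : (pdomeBase P top mid ∩ C).card ≤ C.card := card_le_card inter_subset_right
  have htd : (univ.image fringe ∩ C).card ≤ d :=
    (card_le_card inter_subset_left).trans hg.card_fringe.le
  obtain ⟨hsb, hMd, hcb⟩ := nonfringe_blocking_arith (by exact_mod_cast hs)
    (by exact_mod_cast hsB) (by split_ifs <;> positivity)
    (by split_ifs <;> [exact_mod_cast htd; positivity])
    (by exact_mod_cast hsC) (by exact_mod_cast hb) (by linarith) hlt
  have hBC : pdomeBase P top mid ⊆ C := inter_eq_left.1 <|
    eq_of_subset_of_card_le inter_subset_left (by exact_mod_cast hsb.ge)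
  have hmC : mid ∈ C := by
    by_contra h
    rw [if_neg h] at hMd
    omega
  refine (eq_of_subset_of_card_le (insert_subset hmC hBC) ?_).symm
  rw [card_insert_of_notMem (mid_notMem_pdomeBase P top mid)]
  exact_mod_cast hcb

lemma not_utilAvgEQ_lt_insert_mid [Fintype N]
    (hg : IsPinchedDomeGadget G d k' P top mid fringe) (hout : HasNoOutsideFriendsExcept G P top)
    {z : N} (hz : z ∈ univ.image fringe) :
    ¬ utilAvgEQ G P z < utilAvgEQ G (insert mid (pdomeBase P top mid)) z := by
  intro hlt
  have hzB := hg.fringe_subset hz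
  have hmidB := mid_notMem_pdomeBase P top mid
  have hBD : pdomeBase P top mid ∩ insert mid (pdomeBase P top mid) = pdomeBase P top mid :=
    inter_eq_left.2 (subset_insert _ _)
  have hFD : univ.image fringe ∩ insert mid (pdomeBase P top mid) = univ.image fringe :=
    inter_eq_left.2 (hg.fringe_subset.trans (subset_insert _ _))
  have hCz : closedFriendsIn G (insert mid (pdomeBase P top mid)) z =
      insert mid (pdomeBase P top mid) := by
    rw [hg.closedFriendsIn_of_mem_pdomeBase hout hzB (mem_insert_of_mem hzB),
      if_pos ⟨hz, mem_insert_self _ _⟩, hBD]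
  -- `mid` has lost its friend `top`
  have hmid := hg.card_friendsIn_mid_le hout (insert mid (pdomeBase P top mid))
  rw [hFD, hg.card_fringe, if_neg (by simp [hg.mid_ne_top.symm, mem_pdomeBase]), add_zero] at hmid
  have hsum :=
    hg.friendDegreeSum_insert_mid_pdomeBase_inter hout (mem_insert_self mid (pdomeBase P top mid))
  rw [hBD, hFD, hg.card_fringe] at hsum
  rw [hg.utilAvgEQ_lt_iff_of_mem_fringe hout hz (mem_insert_of_mem hzB), hCz, hsum,
    card_insert_of_notMem hmidB] at hlt
  have hn : (pdomeBase P top mid).card + 1 ≤ Fintype.card N := by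
    simpa [card_insert_of_notMem hmidB] using card_le_univ (insert mid (pdomeBase P top mid))
  have hmid' : ((friendsIn G (insert mid (pdomeBase P top mid)) mid).card : ℤ) ≤ d := by
    exact_mod_cast hmid
  have hn' : ((pdomeBase P top mid).card : ℤ) + 1 ≤ Fintype.card N := by exact_mod_cast hn
  push_cast at hlt
  nlinarith [mul_nonneg (mul_nonneg (by positivity : (0 : ℤ) ≤ Fintype.card N + 1)
    (by positivity : (0 : ℤ) ≤ (pdomeBase P top mid).card + 1)) (sub_nonneg.2 hmid')]

lemma not_utilAvgEQ_lt_of_inter_subset_fringe [Fintype N]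
    (hg : IsPinchedDomeGadget G d k' P top mid fringe) (hout : HasNoOutsideFriendsExcept G P top)
    (hb : d + 3 ≤ (pdomeBase P top mid).card)
    (hn : 2 * (pdomeBase P top mid).card + 2 * d + 2 ≤ Fintype.card N)
    {C : Finset N} {y : N} (hy : y ∈ univ.image fringe) (hyC : y ∈ C)
    (hBC : pdomeBase P top mid ∩ C ⊆ univ.image fringe) :
    ¬ utilAvgEQ G P y < utilAvgEQ G C y := by
  intro hlt
  have hyB := hg.fringe_subset hy
  have hFC : univ.image fringe ∩ C = pdomeBase P top mid ∩ C :=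
    (inter_subset_inter_right hg.fringe_subset).antisymm
      fun x hx => mem_inter.2 ⟨hBC hx, (mem_inter.1 hx).2⟩
  have hs : 1 ≤ (pdomeBase P top mid ∩ C).card := card_pos.2 ⟨y, mem_inter.2 ⟨hyB, hyC⟩⟩
  have hsd : (pdomeBase P top mid ∩ C).card ≤ d :=
    hFC ▸ (card_le_card inter_subset_left).trans hg.card_fringe.le
  rw [hg.utilAvgEQ_lt_iff_of_mem_fringe hout hy hyC,
    hg.closedFriendsIn_of_mem_pdomeBase hout hyB hyC] at hlt
  by_cases hmC : mid ∈ C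
  · have hmidBC : mid ∉ pdomeBase P top mid ∩ C :=
      fun h => mid_notMem_pdomeBase P top mid (mem_inter.1 h).1
    have hcs : (pdomeBase P top mid ∩ C).card + 1 ≤ C.card := by
      simpa [card_insert_of_notMem hmidBC] using
        card_le_card (insert_subset hmC (inter_subset_right (s₁ := pdomeBase P top mid)))
    have hmid : (friendsIn G C mid).card ≤ (pdomeBase P top mid ∩ C).card + 1 :=
      (hg.card_friendsIn_mid_le hout C).trans (by rw [hFC]; split_ifs <;> simp)
    rw [if_pos ⟨hy, hmC⟩, hg.friendDegreeSum_insert_mid_pdomeBase_inter hout hmC, hFC,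
      card_insert_of_notMem hmidBC] at hlt
    push_cast at hlt
    refine fringe_blocking_arith_of_mid_mem (by exact_mod_cast hs) (by exact_mod_cast hsd)
      (by exact_mod_cast hb) (by linarith) (by exact_mod_cast hcs) ?_ hlt
    have : ((friendsIn G C mid).card : ℤ) ≤ (pdomeBase P top mid ∩ C).card + 1 := by
      exact_mod_cast hmid
    nlinarith
  · rw [if_neg fun h => hmC h.2, hg.friendDegreeSum_pdomeBase_inter hout, if_neg hmC,
      add_zero] at hlt
    exact fringe_blocking_arith_of_mid_notMem (by exact_mod_cast hs) (by exact_mod_cast hsd)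
      (by exact_mod_cast hb) (by linarith) (by exact_mod_cast card_le_card inter_subset_right) hlt

end IsPinchedDomeGadget

end PinchedDome

/-- Proposition (pinched dome gadget, avg-EQ): in an avg-EQ altruistic hedonic game
on `n` players whose network of friends `G` contains a pinched `(d,k')`-dome gadget
on `P` (`d ≥ 1`, `k' > 2d+3`, `n ≥ k'·(d+1)`) such that no player of `P` except the
top player has a friend outside `P`, if `P` is a coalition of the coalition
structure `Γ` and a coalition `C` blocks `Γ`, then `C` contains no player of the
base clique (in particular, no fringe player). -/
theorem pinched_dome_base_not_in_blocking_avgEQ {N : Type*} [Fintype N] [DecidableEq N]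
    (G : SimpleGraph N) (d k' : ℕ) (hd : 1 ≤ d) (hk' : 2 * d + 3 < k')
    (hn : k' * (d + 1) ≤ Fintype.card N)
    (P : Finset N) (top mid : N) (fringe : Fin d → N)
    (hgadget : IsPinchedDomeGadget G d k' P top mid fringe)
    (houtside : ∀ x ∈ P, x ≠ top → ∀ y : N, G.Adj x y → y ∈ P)
    (Γ : CoalitionStructure N) (hΓ : ∀ i ∈ P, Γ.part i = P)
    (C : Finset N) (hC : Blocks (utilAvgEQ G) Γ C) :
    ∀ x ∈ pdomeBase P top mid, x ∉ C := by
  intro x hxB hxC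
  have hk := hgadget.card_pdomeBase_add
  have hb : d + 3 ≤ (pdomeBase P top mid).card := by omega
  have hn' : 2 * (pdomeBase P top mid).card + 2 * d + 2 ≤ Fintype.card N := by nlinarith
  have hlt : ∀ y ∈ pdomeBase P top mid, y ∈ C → utilAvgEQ G P y < utilAvgEQ G C y :=
    fun y hy hyC => hΓ y (pdomeBase_subset P top mid hy) ▸ hC.2 y hyC
  by_cases hfringe : pdomeBase P top mid ∩ C ⊆ univ.image fringe
  · exact hgadget.not_utilAvgEQ_lt_of_inter_subset_fringe houtside hb hn'
      (hfringe (mem_inter.2 ⟨hxB, hxC⟩)) hxC hfringe (hlt x hxB hxC)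
  · obtain ⟨y, hy, hyF⟩ := not_subset.1 hfringe
    have hCeq := hgadget.eq_insert_mid_of_utilAvgEQ_lt houtside hd hb hn' (mem_inter.1 hy).1 hyF
      (mem_inter.1 hy).2 (hlt y (mem_inter.1 hy).1 (mem_inter.1 hy).2)
    have hz : fringe ⟨0, hd⟩ ∈ univ.image fringe := mem_image_of_mem _ (mem_univ _)
    have hzB := hgadget.fringe_subset hz
    exact hgadget.not_utilAvgEQ_lt_insert_mid houtside hz
      (hCeq ▸ hlt _ hzB (hCeq ▸ mem_insert_of_mem hzB))
end

section
/- Consider an altruistic hedonic game under avg-AL utilities (with fixed weight w ≥ n^4) on n players whose network of friends contains a (d,k')-dome gadget on a player set P, where d ≥ 1, k' > 2d+3, and n ≥ k'·(d+1), and such that no player of P other than the top player p* has a friend outside P. Let Γ be a coalition structure containing P as a coalition. If a coalition C blocks Γ, then C contains no player of the base clique of the gadget (in particular, no fringe player). -/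
open Finset
open scoped Classical

section DomeProofAux

set_option linter.unusedSectionVars false

variable {N : Type*} [Fintype N] [DecidableEq N]

lemma friendsIn_subset' (G : SimpleGraph N) (C : Finset N) (x : N) :
    friendsIn G C x ⊆ C := filter_subset _ _

lemma mem_friendsIn {G : SimpleGraph N} {C : Finset N} {x y : N} :
    y ∈ friendsIn G C x ↔ y ∈ C ∧ G.Adj x y := by simp [friendsIn]

lemma self_notMem_friendsIn (G : SimpleGraph N) (C : Finset N) (x : N) :
    x ∉ friendsIn G C x := by simp [friendsIn]

lemma card_friendsIn_le (G : SimpleGraph N) (C : Finset N) (x : N) :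
    (friendsIn G C x).card ≤ Fintype.card N - 1 := by
  have h : friendsIn G C x ⊆ univ.erase x := by
    intro y hy
    rw [mem_friendsIn] at hy
    exact mem_erase.2 ⟨hy.2.ne', mem_univ _⟩
  calc (friendsIn G C x).card ≤ (univ.erase x).card := card_le_card h
    _ = Fintype.card N - 1 := by rw [card_erase_of_mem (mem_univ _), card_univ]

lemma fval_formula (G : SimpleGraph N) {C : Finset N} {x : N} (hx : x ∈ C) :
    fval G C x = ((Fintype.card N : ℤ) + 1) * ((friendsIn G C x).card : ℤ)
      - (C.card : ℤ) + 1 := by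
  have hset : C.filter (fun j => ¬ G.Adj x j ∧ j ≠ x) = C \ insert x (friendsIn G C x) := by
    ext y
    simp only [mem_filter, mem_sdiff, mem_insert, mem_friendsIn]
    constructor
    · rintro ⟨hyC, hna, hne⟩
      refine ⟨hyC, ?_⟩
      rintro (rfl | ⟨_, h⟩)
      · exact hne rfl
      · exact hna h
    · rintro ⟨hyC, h⟩
      push_neg at h
      exact ⟨hyC, fun ha => h.2 hyC ha, h.1⟩
  have hsub : insert x (friendsIn G C x) ⊆ C :=
    insert_subset hx (friendsIn_subset' G C x)
  have hxn : x ∉ friendsIn G C x := self_notMem_friendsIn G C x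
  have hle : (friendsIn G C x).card + 1 ≤ C.card := by
    calc (friendsIn G C x).card + 1 = (insert x (friendsIn G C x)).card := by
          rw [card_insert_of_notMem hxn]
      _ ≤ C.card := card_le_card hsub
  rw [fval, hset, card_sdiff_of_subset hsub, card_insert_of_notMem hxn]
  have hc : ((C.card - ((friendsIn G C x).card + 1) : ℕ) : ℤ)
      = (C.card : ℤ) - ((friendsIn G C x).card : ℤ) - 1 := by
    push_cast [Nat.cast_sub hle]
    ring
  rw [hc]; ring

lemma fval_le_bound (G : SimpleGraph N) (C : Finset N) (x : N) :
    fval G C x ≤ (Fintype.card N : ℤ) * ((Fintype.card N : ℤ) - 1) := by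
  have h0 : (1 : ℕ) ≤ Fintype.card N := Fintype.card_pos_iff.2 ⟨x⟩
  have h1 : ((friendsIn G C x).card : ℤ) ≤ (Fintype.card N : ℤ) - 1 := by
    have h := card_friendsIn_le G C x
    omega
  have h2 : (0 : ℤ) ≤ ((C.filter fun j => ¬ G.Adj x j ∧ j ≠ x).card : ℤ) := by positivity
  have h3 : (0 : ℤ) ≤ (Fintype.card N : ℤ) := by positivity
  rw [fval]
  nlinarith

lemma neg_bound_le_fval (G : SimpleGraph N) (C : Finset N) (x : N) :
    -((Fintype.card N : ℤ) - 1) ≤ fval G C x := by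
  have h0 : (1 : ℕ) ≤ Fintype.card N := Fintype.card_pos_iff.2 ⟨x⟩
  have h2 : ((C.filter fun j => ¬ G.Adj x j ∧ j ≠ x).card : ℤ) ≤ (Fintype.card N : ℤ) - 1 := by
    have hsub : (C.filter fun j => ¬ G.Adj x j ∧ j ≠ x) ⊆ univ.erase x := by
      intro y hy
      rw [mem_filter] at hy
      exact mem_erase.2 ⟨hy.2.2, mem_univ _⟩
    have h := card_le_card hsub
    rw [card_erase_of_mem (mem_univ _), card_univ] at h
    omega
  have h3 : (0 : ℤ) ≤ (Fintype.card N : ℤ) * ((friendsIn G C x).card : ℤ) := by positivity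
  rw [fval]
  linarith

/-- The altruistic (average) term of the avg-AL utility. -/
noncomputable def Tterm (G : SimpleGraph N) (C : Finset N) (x : N) : ℚ :=
  if (friendsIn G C x).Nonempty then
    (∑ c ∈ friendsIn G C x, (fval G C c : ℚ)) / ((friendsIn G C x).card : ℚ)
  else 0

lemma utilAvgAL_eq_Tterm (G : SimpleGraph N) (w : ℚ) (C : Finset N) (x : N) :
    utilAvgAL G w C x = (fval G C x : ℚ) + w * Tterm G C x := rfl

lemma Tterm_repr (G : SimpleGraph N) (C : Finset N) (x : N) (hn2 : 2 ≤ Fintype.card N) :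
    ∃ z : ℤ, ∃ q : ℕ, 1 ≤ q ∧ q ≤ Fintype.card N - 1 ∧
      Tterm G C x = (z : ℚ) / (q : ℚ) := by
  by_cases h : (friendsIn G C x).Nonempty
  · refine ⟨∑ c ∈ friendsIn G C x, fval G C c, (friendsIn G C x).card,
      card_pos.2 h, card_friendsIn_le G C x, ?_⟩
    rw [Tterm, if_pos h]
    push_cast
    rfl
  · exact ⟨0, 1, le_refl _, by omega, by rw [Tterm, if_neg h]; simp⟩

lemma util_lt_of_Tterm_lt (G : SimpleGraph N) {w : ℚ}
    (hw : (Fintype.card N : ℚ) ^ 4 ≤ w) (hn2 : 2 ≤ Fintype.card N)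
    {C D : Finset N} {x : N} (hT : Tterm G C x < Tterm G D x) :
    utilAvgAL G w C x < utilAvgAL G w D x := by
  obtain ⟨zC, qC, hqC1, hqCn, hCeq⟩ := Tterm_repr G C x hn2
  obtain ⟨zD, qD, hqD1, hqDn, hDeq⟩ := Tterm_repr G D x hn2
  set ν : ℚ := (Fintype.card N : ℚ) with hν
  have hν2 : (2 : ℚ) ≤ ν := by rw [hν]; exact_mod_cast hn2
  have hqCpos : (0 : ℚ) < (qC : ℚ) := by exact_mod_cast hqC1
  have hqDpos : (0 : ℚ) < (qD : ℚ) := by exact_mod_cast hqD1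
  have hqCle : (qC : ℚ) ≤ ν - 1 := by
    have h := (Nat.cast_le (α := ℚ)).2 hqCn
    rwa [Nat.cast_sub (by omega), Nat.cast_one] at h
  have hqDle : (qD : ℚ) ≤ ν - 1 := by
    have h := (Nat.cast_le (α := ℚ)).2 hqDn
    rwa [Nat.cast_sub (by omega), Nat.cast_one] at h
  have hmul : (zC : ℚ) * qD < (zD : ℚ) * qC := by
    rw [hCeq, hDeq, div_lt_div_iff₀ hqCpos hqDpos] at hT
    exact hT
  have hint : zC * (qD : ℤ) + 1 ≤ zD * (qC : ℤ) := by
    have h : zC * (qD : ℤ) < zD * (qC : ℤ) := by exact_mod_cast hmul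
    omega
  have hgap : (1 : ℚ) / ((ν - 1) ^ 2) ≤ Tterm G D x - Tterm G C x := by
    rw [hCeq, hDeq, div_sub_div _ _ (ne_of_gt hqDpos) (ne_of_gt hqCpos)]
    have hnum : (1 : ℚ) ≤ (zD : ℚ) * qC - (qD : ℚ) * zC := by
      have h : ((zC * (qD : ℤ) + 1 : ℤ) : ℚ) ≤ ((zD * (qC : ℤ) : ℤ) : ℚ) := by
        exact_mod_cast hint
      push_cast at h
      linarith
    have hden : (0 : ℚ) < (qD : ℚ) * qC := by positivity
    have hdenle : (qD : ℚ) * qC ≤ (ν - 1) ^ 2 := by nlinarith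
    calc (1 : ℚ) / ((ν - 1) ^ 2) ≤ 1 / ((qD : ℚ) * qC) :=
          one_div_le_one_div_of_le hden hdenle
      _ ≤ ((zD : ℚ) * qC - (qD : ℚ) * zC) / ((qD : ℚ) * qC) :=
          (div_le_div_iff_of_pos_right hden).2 (by linarith)
  have hwpos : (0 : ℚ) < w := lt_of_lt_of_le (by positivity) hw
  have hterm : ν ^ 4 * (1 / ((ν - 1) ^ 2)) ≤ w * (Tterm G D x - Tterm G C x) :=
    mul_le_mul hw hgap (by positivity) (le_of_lt hwpos)
  have hfC : (fval G C x : ℚ) ≤ ν * (ν - 1) := by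
    have h := fval_le_bound G C x
    have h' : ((fval G C x : ℤ) : ℚ) ≤ (((Fintype.card N : ℤ) * ((Fintype.card N : ℤ) - 1) : ℤ) : ℚ) := by
      exact_mod_cast h
    push_cast at h'
    exact h'
  have hfD : -(ν - 1) ≤ (fval G D x : ℚ) := by
    have h := neg_bound_le_fval G D x
    have h' : ((-((Fintype.card N : ℤ) - 1) : ℤ) : ℚ) ≤ ((fval G D x : ℤ) : ℚ) := by
      exact_mod_cast h
    push_cast at h'
    exact h'
  have hkey : ν * (ν - 1) + (ν - 1) < ν ^ 4 * (1 / ((ν - 1) ^ 2)) := by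
    rw [mul_one_div, lt_div_iff₀ (by nlinarith : (0 : ℚ) < (ν - 1) ^ 2)]
    nlinarith [sq_nonneg ν, sq_nonneg (ν - 1), sq_nonneg (ν * ν - 1)]
  rw [utilAvgAL_eq_Tterm, utilAvgAL_eq_Tterm]
  nlinarith

lemma Tterm_le {G : SimpleGraph N} {C : Finset N} {x : N} {M : ℤ} (hM : 0 ≤ M)
    (h : ∀ c ∈ friendsIn G C x, fval G C c ≤ M) :
    Tterm G C x ≤ (M : ℚ) := by
  rw [Tterm]
  split_ifs with h'
  · have hpos : (0 : ℚ) < ((friendsIn G C x).card : ℚ) := by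
      exact_mod_cast card_pos.2 h'
    rw [div_le_iff₀ hpos]
    calc ∑ c ∈ friendsIn G C x, (fval G C c : ℚ)
        ≤ ∑ _c ∈ friendsIn G C x, (M : ℚ) := by
          apply sum_le_sum
          intro c hc
          exact_mod_cast h c hc
      _ = (M : ℚ) * ((friendsIn G C x).card : ℚ) := by
          rw [sum_const, nsmul_eq_mul]; ring
  · exact_mod_cast hM

lemma lt_Tterm {G : SimpleGraph N} {D : Finset N} {x : N} {M : ℤ}
    (hne : (friendsIn G D x).Nonempty)
    (h : M * ((friendsIn G D x).card : ℤ) < ∑ c ∈ friendsIn G D x, fval G D c) :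
    (M : ℚ) < Tterm G D x := by
  rw [Tterm, if_pos hne]
  have hpos : (0 : ℚ) < ((friendsIn G D x).card : ℚ) := by
    exact_mod_cast card_pos.2 hne
  rw [lt_div_iff₀ hpos]
  have hcast : (∑ c ∈ friendsIn G D x, (fval G D c : ℚ))
      = ((∑ c ∈ friendsIn G D x, fval G D c : ℤ) : ℚ) := by push_cast; rfl
  rw [hcast]
  exact_mod_cast h

lemma Tterm_lt_Tterm {G : SimpleGraph N} {C D : Finset N} {x : N}
    (hset : friendsIn G C x = friendsIn G D x)
    (hne : (friendsIn G C x).Nonempty)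
    (hsum : ∑ c ∈ friendsIn G C x, fval G C c < ∑ c ∈ friendsIn G D x, fval G D c) :
    Tterm G C x < Tterm G D x := by
  have hneD : (friendsIn G D x).Nonempty := hset ▸ hne
  rw [Tterm, Tterm, if_pos hne, if_pos hneD]
  have hpos : (0 : ℚ) < ((friendsIn G C x).card : ℚ) := by
    exact_mod_cast card_pos.2 hne
  have hcard : ((friendsIn G D x).card : ℚ) = ((friendsIn G C x).card : ℚ) := by rw [hset]
  rw [hcard, div_lt_div_iff₀ hpos hpos]
  have h1 : ((∑ c ∈ friendsIn G C x, fval G C c : ℤ) : ℚ)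
      < ((∑ c ∈ friendsIn G D x, fval G D c : ℤ) : ℚ) := by exact_mod_cast hsum
  push_cast at h1
  nlinarith

end DomeProofAux

section DomeGadgetAux

set_option linter.unusedSectionVars false
set_option maxHeartbeats 1000000

variable {N : Type*} [Fintype N] [DecidableEq N]
variable {G : SimpleGraph N} {d k' : ℕ} {P : Finset N} {top : N} {mid fringe : Fin d → N}

lemma mem_domeBase {x : N} :
    x ∈ domeBase P top mid ↔ x ∈ P ∧ x ≠ top ∧ ∀ i, x ≠ mid i := by
  simp only [domeBase, mem_sdiff, mem_insert, mem_image, mem_univ, true_and]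
  constructor
  · rintro ⟨hP, h⟩
    exact ⟨hP, fun ht => h (Or.inl ht), fun i hi => h (Or.inr ⟨i, hi.symm⟩)⟩
  · rintro ⟨hP, h1, h2⟩
    refine ⟨hP, ?_⟩
    rintro (rfl | ⟨i, rfl⟩)
    · exact h1 rfl
    · exact h2 i rfl

lemma base_subset_P : domeBase P top mid ⊆ P := sdiff_subset

lemma top_not_base : top ∉ domeBase P top mid := by
  rw [mem_domeBase]; tauto

lemma mid_not_base (i : Fin d) : mid i ∉ domeBase P top mid := by
  rw [mem_domeBase]
  rintro ⟨-, -, h⟩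
  exact h i rfl

lemma hg_card_base (hg : IsDomeGadget G d k' P top mid fringe) :
    (domeBase P top mid).card + (d + 1) = k' := by
  have hsub : insert top (univ.image mid) ⊆ P := by
    refine insert_subset hg.top_mem ?_
    intro y hy
    obtain ⟨i, -, rfl⟩ := mem_image.1 hy
    exact hg.mid_mem i
  have htopn : top ∉ univ.image mid := by
    rw [mem_image]
    rintro ⟨i, -, hi⟩
    exact hg.mid_ne_top i hi
  have hcard : (insert top (univ.image mid)).card = d + 1 := by
    rw [card_insert_of_notMem htopn, card_image_of_injective _ hg.mid_inj,
      card_univ, Fintype.card_fin]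
  have hle := card_le_card hsub
  rw [hcard, hg.card_eq] at hle
  rw [domeBase, card_sdiff_of_subset hsub, hcard, hg.card_eq]
  omega

lemma fringe_subset_base (hg : IsDomeGadget G d k' P top mid fringe) :
    univ.image fringe ⊆ domeBase P top mid := by
  intro y hy
  obtain ⟨i, -, rfl⟩ := mem_image.1 hy
  exact hg.fringe_mem i

lemma hg_card_fringe (hg : IsDomeGadget G d k' P top mid fringe) :
    (univ.image fringe).card = d := by
  rw [card_image_of_injective _ hg.fringe_inj, card_univ, Fintype.card_fin]

lemma fringe_mem_P (hg : IsDomeGadget G d k' P top mid fringe) (i : Fin d) :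
    fringe i ∈ P := base_subset_P (hg.fringe_mem i)

lemma fringe_ne_mid (hg : IsDomeGadget G d k' P top mid fringe) (i j : Fin d) :
    fringe i ≠ mid j := by
  intro h
  exact mid_not_base j (h ▸ hg.fringe_mem i)

lemma fringe_ne_top (hg : IsDomeGadget G d k' P top mid fringe) (i : Fin d) :
    fringe i ≠ top := by
  intro h
  exact top_not_base (h ▸ hg.fringe_mem i)

/-- Adjacency of a base player: exactly the other base players, plus its own
mid player when it is a fringe player. -/
lemma adj_base (hg : IsDomeGadget G d k' P top mid fringe)
    (hout : ∀ x ∈ P, x ≠ top → ∀ y : N, G.Adj x y → y ∈ P)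
    {c : N} (hc : c ∈ domeBase P top mid) (y : N) :
    G.Adj c y ↔ ((y ∈ domeBase P top mid ∧ y ≠ c) ∨ ∃ i, c = fringe i ∧ y = mid i) := by
  obtain ⟨hcP, hctop, hcmid⟩ := mem_domeBase.1 hc
  constructor
  · intro hadj
    have hyP : y ∈ P := hout c hcP hctop y hadj
    rw [hg.adj_iff c hcP y hyP] at hadj
    rcases hadj with ⟨h1, -⟩ | ⟨-, i, h2⟩ | ⟨-, hyB, hne⟩ | ⟨i, ⟨h3, -⟩ | ⟨h4, h5⟩⟩
    · exact absurd h1 hctop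
    · exact absurd h2 (hcmid i)
    · exact Or.inl ⟨hyB, Ne.symm hne⟩
    · exact absurd h3 (hcmid i)
    · exact Or.inr ⟨i, h5, h4⟩
  · rintro (⟨hyB, hyne⟩ | ⟨i, rfl, rfl⟩)
    · have hyP : y ∈ P := base_subset_P hyB
      rw [hg.adj_iff c hcP y hyP]
      exact Or.inr (Or.inr (Or.inl ⟨hc, hyB, Ne.symm hyne⟩))
    · rw [hg.adj_iff _ hcP _ (hg.mid_mem i)]
      exact Or.inr (Or.inr (Or.inr ⟨i, Or.inr ⟨rfl, rfl⟩⟩))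

/-- Adjacency of a mid player: exactly the top player and its fringe player. -/
lemma adj_mid (hg : IsDomeGadget G d k' P top mid fringe)
    (hout : ∀ x ∈ P, x ≠ top → ∀ y : N, G.Adj x y → y ∈ P)
    (i : Fin d) (y : N) :
    G.Adj (mid i) y ↔ (y = top ∨ y = fringe i) := by
  constructor
  · intro hadj
    have hyP : y ∈ P := hout (mid i) (hg.mid_mem i) (hg.mid_ne_top i) y hadj
    rw [hg.adj_iff _ (hg.mid_mem i) y hyP] at hadj
    rcases hadj with ⟨h1, -⟩ | ⟨h2, -⟩ | ⟨hB, -, -⟩ | ⟨j, ⟨h3, h4⟩ | ⟨-, h6⟩⟩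
    · exact absurd h1 (hg.mid_ne_top i)
    · exact Or.inl h2
    · exact absurd hB (mid_not_base i)
    · exact Or.inr (by rw [h4, hg.mid_inj h3])
    · exact absurd h6.symm (fringe_ne_mid hg j i)
  · rintro (rfl | rfl)
    · rw [hg.adj_iff _ (hg.mid_mem i) _ hg.top_mem]
      exact Or.inr (Or.inl ⟨rfl, i, rfl⟩)
    · rw [hg.adj_iff _ (hg.mid_mem i) _ (fringe_mem_P hg i)]
      exact Or.inr (Or.inr (Or.inr ⟨i, Or.inl ⟨rfl, rfl⟩⟩))

lemma friendsIn_base_nonfringe (hg : IsDomeGadget G d k' P top mid fringe)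
    (hout : ∀ x ∈ P, x ≠ top → ∀ y : N, G.Adj x y → y ∈ P)
    {c : N} (hc : c ∈ domeBase P top mid) (hcf : c ∉ univ.image fringe)
    (C : Finset N) :
    friendsIn G C c = (C ∩ domeBase P top mid).erase c := by
  ext y
  rw [mem_friendsIn, adj_base hg hout hc, mem_erase, mem_inter]
  constructor
  · rintro ⟨hyC, ⟨hyB, hyne⟩ | ⟨i, rfl, -⟩⟩
    · exact ⟨hyne, hyC, hyB⟩
    · exact absurd (mem_image.2 ⟨i, mem_univ i, rfl⟩) hcf
  · rintro ⟨hyne, hyC, hyB⟩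
    exact ⟨hyC, Or.inl ⟨hyB, hyne⟩⟩

lemma friendsIn_fringe (hg : IsDomeGadget G d k' P top mid fringe)
    (hout : ∀ x ∈ P, x ≠ top → ∀ y : N, G.Adj x y → y ∈ P)
    (i : Fin d) (C : Finset N) :
    friendsIn G C (fringe i)
      = (C ∩ domeBase P top mid).erase (fringe i) ∪ (C ∩ {mid i}) := by
  ext y
  rw [mem_friendsIn, adj_base hg hout (hg.fringe_mem i), mem_union, mem_erase,
    mem_inter, mem_inter, mem_singleton]
  constructor
  · rintro ⟨hyC, ⟨hyB, hyne⟩ | ⟨j, hj, rfl⟩⟩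
    · exact Or.inl ⟨hyne, hyC, hyB⟩
    · exact Or.inr ⟨hyC, by rw [hg.fringe_inj hj]⟩
  · rintro (⟨hyne, hyC, hyB⟩ | ⟨hyC, rfl⟩)
    · exact ⟨hyC, Or.inl ⟨hyB, hyne⟩⟩
    · exact ⟨hyC, Or.inr ⟨i, rfl, rfl⟩⟩

lemma friendsIn_mid (hg : IsDomeGadget G d k' P top mid fringe)
    (hout : ∀ x ∈ P, x ≠ top → ∀ y : N, G.Adj x y → y ∈ P)
    (i : Fin d) (C : Finset N) :
    friendsIn G C (mid i) = C ∩ ({top, fringe i} : Finset N) := by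
  ext y
  rw [mem_friendsIn, adj_mid hg hout i, mem_inter, mem_insert, mem_singleton]

end DomeGadgetAux
section DomeValsAux

set_option linter.unusedSectionVars false
set_option maxHeartbeats 1000000

variable {N : Type*} [Fintype N] [DecidableEq N]
variable {G : SimpleGraph N} {d k' : ℕ} {P : Finset N} {top : N} {mid fringe : Fin d → N}

/-- Indicator: `c` is a fringe player whose mid player belongs to `C`. -/
noncomputable def muF (mid fringe : Fin d → N) (C : Finset N) (c : N) : ℤ :=
  if ∃ i, c = fringe i ∧ mid i ∈ C then 1 else 0

lemma muF_nonneg {C : Finset N} {c : N} : 0 ≤ muF mid fringe C c := by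
  rw [muF]; split_ifs <;> norm_num

lemma muF_le_one {C : Finset N} {c : N} : muF mid fringe C c ≤ 1 := by
  rw [muF]; split_ifs <;> norm_num

lemma muF_eq_zero {C : Finset N} {c : N} (hcf : c ∉ univ.image fringe) :
    muF mid fringe C c = 0 := by
  rw [muF, if_neg]
  rintro ⟨i, rfl, -⟩
  exact hcf (mem_image.2 ⟨i, mem_univ i, rfl⟩)

lemma muF_fringe (hinj : Function.Injective fringe) (i : Fin d) (C : Finset N) :
    muF mid fringe C (fringe i) = if mid i ∈ C then 1 else 0 := by
  rw [muF]
  by_cases h : mid i ∈ C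
  · rw [if_pos ⟨i, rfl, h⟩, if_pos h]
  · rw [if_neg, if_neg h]
    rintro ⟨j, hj, hmj⟩
    cases hinj hj
    exact h hmj

lemma card_friendsIn_base (hg : IsDomeGadget G d k' P top mid fringe)
    (hout : ∀ x ∈ P, x ≠ top → ∀ y : N, G.Adj x y → y ∈ P)
    {C : Finset N} {c : N} (hc : c ∈ domeBase P top mid) (hcC : c ∈ C) :
    ((friendsIn G C c).card : ℤ)
      = ((C ∩ domeBase P top mid).card : ℤ) - 1 + muF mid fringe C c := by
  have hcCB : c ∈ C ∩ domeBase P top mid := mem_inter.2 ⟨hcC, hc⟩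
  have hpos : 1 ≤ (C ∩ domeBase P top mid).card := card_pos.2 ⟨c, hcCB⟩
  by_cases hcf : c ∈ univ.image fringe
  · obtain ⟨i, -, rfl⟩ := mem_image.1 hcf
    rw [friendsIn_fringe hg hout i C]
    have hdisj : Disjoint ((C ∩ domeBase P top mid).erase (fringe i)) (C ∩ {mid i}) := by
      rw [disjoint_right]
      intro a ha ha'
      have ham : a = mid i := mem_singleton.1 (mem_inter.1 ha).2
      exact mid_not_base i (ham ▸ (mem_inter.1 (mem_of_mem_erase ha')).2)
    have hcs : (C ∩ ({mid i} : Finset N)).card = if mid i ∈ C then 1 else 0 := by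
      split_ifs with hm
      · rw [inter_comm, singleton_inter_of_mem hm, card_singleton]
      · rw [inter_comm, singleton_inter_of_notMem hm, card_empty]
    rw [card_union_of_disjoint hdisj, card_erase_of_mem hcCB, hcs,
      muF_fringe hg.fringe_inj]
    split_ifs <;> omega
  · rw [friendsIn_base_nonfringe hg hout hc hcf, card_erase_of_mem hcCB,
      muF_eq_zero hcf]
    omega

lemma fval_base (hg : IsDomeGadget G d k' P top mid fringe)
    (hout : ∀ x ∈ P, x ≠ top → ∀ y : N, G.Adj x y → y ∈ P)
    {C : Finset N} {c : N} (hc : c ∈ domeBase P top mid) (hcC : c ∈ C) :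
    fval G C c = ((Fintype.card N : ℤ) + 1)
        * (((C ∩ domeBase P top mid).card : ℤ) - 1 + muF mid fringe C c)
      - (C.card : ℤ) + 1 := by
  rw [fval_formula G hcC, card_friendsIn_base hg hout hc hcC]

lemma fval_base_le (hg : IsDomeGadget G d k' P top mid fringe)
    (hout : ∀ x ∈ P, x ≠ top → ∀ y : N, G.Adj x y → y ∈ P)
    {C : Finset N} {c : N} (hc : c ∈ domeBase P top mid) (hcC : c ∈ C) :
    fval G C c ≤ (Fintype.card N : ℤ)
        * (((C ∩ domeBase P top mid).card : ℤ) - 1 + muF mid fringe C c) := by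
  have key : ((C ∩ domeBase P top mid).card : ℤ) + muF mid fringe C c ≤ (C.card : ℤ) := by
    rw [muF]
    split_ifs with h
    · obtain ⟨i, -, hm⟩ := h
      have hnm : mid i ∉ C ∩ domeBase P top mid :=
        fun hx => mid_not_base i (mem_inter.1 hx).2
      have hsub : insert (mid i) (C ∩ domeBase P top mid) ⊆ C :=
        insert_subset hm inter_subset_left
      have h2 := card_le_card hsub
      rw [card_insert_of_notMem hnm] at h2
      exact_mod_cast by omega
    · have h2 := card_le_card (inter_subset_left : C ∩ domeBase P top mid ⊆ C)
      exact_mod_cast by omega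
  rw [fval_base hg hout hc hcC]
  have hexp : ((Fintype.card N : ℤ) + 1)
        * (((C ∩ domeBase P top mid).card : ℤ) - 1 + muF mid fringe C c)
      = (Fintype.card N : ℤ)
        * (((C ∩ domeBase P top mid).card : ℤ) - 1 + muF mid fringe C c)
        + (((C ∩ domeBase P top mid).card : ℤ) - 1 + muF mid fringe C c) := by ring
  linarith [hexp]

lemma card_inter_pair {a b : N} (hab : a ≠ b) (C : Finset N) :
    ((C ∩ ({a, b} : Finset N)).card : ℤ)
      = (if a ∈ C then 1 else 0) + (if b ∈ C then 1 else 0) := by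
  rw [inter_comm, ← filter_mem_eq_inter, card_filter,
    sum_insert (by simp [hab] : a ∉ ({b} : Finset N)), sum_singleton]
  split_ifs <;> norm_num

lemma fval_mid_mem (hg : IsDomeGadget G d k' P top mid fringe)
    (hout : ∀ x ∈ P, x ≠ top → ∀ y : N, G.Adj x y → y ∈ P)
    {C : Finset N} (i : Fin d) (hm : mid i ∈ C) :
    fval G C (mid i) = ((Fintype.card N : ℤ) + 1)
        * ((if top ∈ C then 1 else 0) + (if fringe i ∈ C then 1 else 0))
      - (C.card : ℤ) + 1 := by
  rw [fval_formula G hm, friendsIn_mid hg hout i C,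
    card_inter_pair (Ne.symm (fringe_ne_top hg i)) C]

lemma P_inter_base : P ∩ domeBase P top mid = domeBase P top mid :=
  inter_eq_right.2 base_subset_P

lemma muF_P (hg : IsDomeGadget G d k' P top mid fringe) {c : N} :
    muF mid fringe P c = if c ∈ univ.image fringe then 1 else 0 := by
  by_cases h : c ∈ univ.image fringe
  · obtain ⟨i, -, rfl⟩ := mem_image.1 h
    rw [muF_fringe hg.fringe_inj, if_pos (hg.mid_mem i), if_pos h]
  · rw [muF_eq_zero h, if_neg h]

lemma sum_fval_base (hg : IsDomeGadget G d k' P top mid fringe)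
    (hout : ∀ x ∈ P, x ≠ top → ∀ y : N, G.Adj x y → y ∈ P)
    {C S : Finset N} (hS : S ⊆ domeBase P top mid) (hSC : S ⊆ C) :
    ∑ c ∈ S, fval G C c
      = (S.card : ℤ) * (((Fintype.card N : ℤ) + 1)
            * (((C ∩ domeBase P top mid).card : ℤ) - 1) - (C.card : ℤ) + 1)
        + ((Fintype.card N : ℤ) + 1) * ∑ c ∈ S, muF mid fringe C c := by
  have h1 : ∀ c ∈ S, fval G C c
      = (((Fintype.card N : ℤ) + 1)
            * (((C ∩ domeBase P top mid).card : ℤ) - 1) - (C.card : ℤ) + 1)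
        + ((Fintype.card N : ℤ) + 1) * muF mid fringe C c := by
    intro c hc
    rw [fval_base hg hout (hS hc) (hSC hc)]
    ring
  rw [sum_congr rfl h1, sum_add_distrib, sum_const, ← mul_sum, nsmul_eq_mul]

lemma sum_muF_base (hg : IsDomeGadget G d k' P top mid fringe) (C : Finset N) :
    ∑ c ∈ domeBase P top mid, muF mid fringe C c
      = ((univ.filter fun i => mid i ∈ C).card : ℤ) := by
  rw [← sum_subset (fringe_subset_base hg) (fun c _ hcf => muF_eq_zero hcf),
    sum_image (fun a _ b _ h => hg.fringe_inj h),
    sum_congr rfl (fun i _ => muF_fringe hg.fringe_inj i C)]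
  simp [sum_boole]

lemma sum_muF_erase (hg : IsDomeGadget G d k' P top mid fringe)
    {C : Finset N} {x : N} (hx : x ∈ domeBase P top mid) :
    ∑ c ∈ (domeBase P top mid).erase x, muF mid fringe C c
      = ((univ.filter fun i => mid i ∈ C).card : ℤ) - muF mid fringe C x := by
  rw [sum_erase_eq_sub hx, sum_muF_base hg]

lemma filter_mid_P (hg : IsDomeGadget G d k' P top mid fringe) :
    (univ.filter fun i => mid i ∈ P) = univ :=
  filter_true_of_mem (fun i _ => hg.mid_mem i)

lemma card_C_ge (hg : IsDomeGadget G d k' P top mid fringe) (C : Finset N) :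
    ((C ∩ domeBase P top mid).card : ℤ)
      + ((univ.filter fun i => mid i ∈ C).card : ℤ) ≤ (C.card : ℤ) := by
  have hdisj : Disjoint (C ∩ domeBase P top mid)
      (((univ.filter fun i => mid i ∈ C)).image mid) := by
    rw [disjoint_right]
    intro a ha ha'
    obtain ⟨i, -, rfl⟩ := mem_image.1 ha
    exact mid_not_base i (mem_inter.1 ha').2
  have hsub : (C ∩ domeBase P top mid) ∪ ((univ.filter fun i => mid i ∈ C)).image mid ⊆ C := by
    apply union_subset inter_subset_left
    intro a ha
    obtain ⟨i, hi, rfl⟩ := mem_image.1 ha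
    exact (mem_filter.1 hi).2
  have h1 := card_le_card hsub
  rw [card_union_of_disjoint hdisj, card_image_of_injective _ hg.mid_inj] at h1
  exact_mod_cast h1

end DomeValsAux
section DomeCasesAux

set_option linter.unusedSectionVars false
set_option maxHeartbeats 1000000

variable {N : Type*} [Fintype N] [DecidableEq N]
variable {G : SimpleGraph N} {d k' : ℕ} {P : Finset N} {top : N} {mid fringe : Fin d → N}

lemma case2a (hg : IsDomeGadget G d k' P top mid fringe)
    (hout : ∀ x ∈ P, x ≠ top → ∀ y : N, G.Adj x y → y ∈ P)
    (hd : 1 ≤ d) (hk' : 2 * d + 3 < k') (hn : k' * (d + 1) ≤ Fintype.card N)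
    {C : Finset N} {y : N} (hy : y ∈ domeBase P top mid) (hyC : y ∉ C)
    {x : N} (hx : x ∈ domeBase P top mid) (hxf : x ∉ univ.image fringe)
    (hxC : x ∈ C) :
    Tterm G C x < Tterm G P x := by
  have hbk := hg_card_base hg
  set b := (domeBase P top mid).card with hb
  have hbpos : d + 3 ≤ b := by omega
  have hd1 : (1 : ℤ) ≤ (d : ℤ) := by exact_mod_cast hd
  have hkZ : (b : ℤ) + ((d : ℤ) + 1) = (k' : ℤ) := by exact_mod_cast hbk
  have hnZ : (k' : ℤ) * ((d : ℤ) + 1) ≤ (Fintype.card N : ℤ) := by exact_mod_cast hn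
  have hn0 : (0 : ℤ) ≤ (Fintype.card N : ℤ) := by positivity
  have hb1 : (0 : ℤ) ≤ (b : ℤ) - 1 := by
    have : (1 : ℤ) ≤ (b : ℤ) := by exact_mod_cast (by omega : 1 ≤ b)
    linarith
  -- cardinal bound s ≤ b - 1
  have hssub : C ∩ domeBase P top mid ⊆ (domeBase P top mid).erase y := by
    intro z hz
    obtain ⟨hzC, hzB⟩ := mem_inter.1 hz
    exact mem_erase.2 ⟨fun h => hyC (h ▸ hzC), hzB⟩
  have hsle : ((C ∩ domeBase P top mid).card : ℤ) ≤ (b : ℤ) - 1 := by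
    have h1 := card_le_card hssub
    rw [card_erase_of_mem hy] at h1
    have h2 : 1 ≤ b := by omega
    omega
  -- upper bound for Tterm C
  have hup : Tterm G C x ≤ (((Fintype.card N : ℤ) * ((b : ℤ) - 1) : ℤ) : ℚ) := by
    apply Tterm_le (by positivity)
    intro c hc
    rw [friendsIn_base_nonfringe hg hout hx hxf] at hc
    obtain ⟨hcC, hcB⟩ := mem_inter.1 (mem_of_mem_erase hc)
    calc fval G C c
        ≤ (Fintype.card N : ℤ)
          * (((C ∩ domeBase P top mid).card : ℤ) - 1 + muF mid fringe C c) :=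
          fval_base_le hg hout hcB hcC
      _ ≤ (Fintype.card N : ℤ) * ((b : ℤ) - 1) := by
          have hmu := muF_le_one (mid := mid) (fringe := fringe) (C := C) (c := c)
          apply mul_le_mul_of_nonneg_left _ hn0
          linarith
  -- lower bound for Tterm P
  have hfP : friendsIn G P x = (domeBase P top mid).erase x := by
    rw [friendsIn_base_nonfringe hg hout hx hxf, P_inter_base]
  have hlow : (((Fintype.card N : ℤ) * ((b : ℤ) - 1) : ℤ) : ℚ) < Tterm G P x := by
    apply lt_Tterm
    · rw [hfP]
      apply card_pos.1
      rw [card_erase_of_mem hx]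
      omega
    · rw [hfP, sum_fval_base hg hout (erase_subset _ _)
        ((erase_subset _ _).trans base_subset_P), sum_muF_erase hg hx,
        P_inter_base, filter_mid_P hg, muF_eq_zero hxf, hg.card_eq,
        card_erase_of_mem hx, card_univ, Fintype.card_fin]
      have hc1 : ((b - 1 : ℕ) : ℤ) = (b : ℤ) - 1 := by
        have h2 : 1 ≤ b := by omega
        omega
      rw [hc1]
      have e1 : ((b:ℤ) - 1) * ((d:ℤ) + 1) < (k':ℤ) * ((d:ℤ) + 1) := by
        apply mul_lt_mul_of_pos_right _ (by linarith)
        linarith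
      have e2 : (Fintype.card N : ℤ) * 1 ≤ (Fintype.card N : ℤ) * (d : ℤ) :=
        mul_le_mul_of_nonneg_left hd1 hn0
      nlinarith [e1, e2]
  exact lt_of_le_of_lt hup hlow

lemma case2b (hg : IsDomeGadget G d k' P top mid fringe)
    (hout : ∀ x ∈ P, x ≠ top → ∀ y : N, G.Adj x y → y ∈ P)
    (hd : 1 ≤ d) (hk' : 2 * d + 3 < k') (hn : k' * (d + 1) ≤ Fintype.card N)
    {C : Finset N} {y : N} (hy : y ∈ domeBase P top mid) (hyC : y ∉ C)
    (hall : C ∩ domeBase P top mid ⊆ univ.image fringe)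
    (i : Fin d) (hxC : fringe i ∈ C) :
    Tterm G C (fringe i) < Tterm G P (fringe i) := by
  have hbk := hg_card_base hg
  set b := (domeBase P top mid).card with hb
  have hbpos : d + 3 ≤ b := by omega
  have hd1 : (1 : ℤ) ≤ (d : ℤ) := by exact_mod_cast hd
  have hkZ : (b : ℤ) + ((d : ℤ) + 1) = (k' : ℤ) := by exact_mod_cast hbk
  have hnZ : (k' : ℤ) * ((d : ℤ) + 1) ≤ (Fintype.card N : ℤ) := by exact_mod_cast hn
  have hn0 : (0 : ℤ) ≤ (Fintype.card N : ℤ) := by positivity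
  have hx : fringe i ∈ domeBase P top mid := hg.fringe_mem i
  have hsd : ((C ∩ domeBase P top mid).card : ℤ) ≤ (d : ℤ) := by
    have h1 := card_le_card hall
    rw [hg_card_fringe hg] at h1
    exact_mod_cast h1
  -- upper bound
  have hup : Tterm G C (fringe i)
      ≤ (((Fintype.card N : ℤ) * ((d : ℤ) + 1) + 1 : ℤ) : ℚ) := by
    apply Tterm_le (by positivity)
    intro c hc
    rw [friendsIn_fringe hg hout i C] at hc
    rcases mem_union.1 hc with hc1 | hc2
    · obtain ⟨hcC, hcB⟩ := mem_inter.1 (mem_of_mem_erase hc1)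
      calc fval G C c
          ≤ (Fintype.card N : ℤ)
            * (((C ∩ domeBase P top mid).card : ℤ) - 1 + muF mid fringe C c) :=
            fval_base_le hg hout hcB hcC
        _ ≤ (Fintype.card N : ℤ) * ((d : ℤ) + 1) := by
            have hmu := muF_le_one (mid := mid) (fringe := fringe) (C := C) (c := c)
            apply mul_le_mul_of_nonneg_left _ hn0
            linarith
        _ ≤ (Fintype.card N : ℤ) * ((d : ℤ) + 1) + 1 := by linarith
    · obtain ⟨hcC, hcm⟩ := mem_inter.1 hc2
      rw [mem_singleton] at hcm
      subst hcm
      rw [fval_mid_mem hg hout i hcC, if_pos hxC]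
      have hC2 : 2 ≤ (C.card : ℤ) := by
        have hsub2 : ({fringe i, mid i} : Finset N) ⊆ C :=
          insert_subset hxC (singleton_subset_iff.2 hcC)
        have hcard2 : ({fringe i, mid i} : Finset N).card = 2 := by
          rw [card_insert_of_notMem (by simp [fringe_ne_mid hg i i]), card_singleton]
        have := card_le_card hsub2
        rw [hcard2] at this
        exact_mod_cast this
      have e2 : (Fintype.card N : ℤ) * 1 ≤ (Fintype.card N : ℤ) * (d : ℤ) :=
        mul_le_mul_of_nonneg_left hd1 hn0
      split_ifs <;> nlinarith [e2]
  -- lower bound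
  have hmP : P ∩ ({mid i} : Finset N) = {mid i} := by
    rw [inter_comm]
    exact singleton_inter_of_mem (hg.mid_mem i)
  have hfP : friendsIn G P (fringe i)
      = (domeBase P top mid).erase (fringe i) ∪ {mid i} := by
    rw [friendsIn_fringe hg hout i P, P_inter_base, hmP]
  have hdisj : Disjoint ((domeBase P top mid).erase (fringe i)) ({mid i} : Finset N) := by
    rw [disjoint_singleton_right]
    exact fun h => mid_not_base i (mem_of_mem_erase h)
  have hmuxP : muF mid fringe P (fringe i) = 1 := by
    rw [muF_fringe hg.fringe_inj, if_pos (hg.mid_mem i)]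
  have hlow : (((Fintype.card N : ℤ) * ((d : ℤ) + 1) + 1 : ℤ) : ℚ)
      < Tterm G P (fringe i) := by
    apply lt_Tterm
    · rw [hfP]
      exact ⟨mid i, mem_union_right _ (mem_singleton_self _)⟩
    · rw [hfP, sum_union hdisj, sum_singleton, card_union_of_disjoint hdisj,
        card_singleton, card_erase_of_mem hx,
        sum_fval_base hg hout (erase_subset _ _)
          ((erase_subset _ _).trans base_subset_P),
        sum_muF_erase hg hx, P_inter_base, filter_mid_P hg, hmuxP, hg.card_eq,
        card_erase_of_mem hx, card_univ, Fintype.card_fin,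
        fval_mid_mem hg hout i (hg.mid_mem i), if_pos hg.top_mem,
        if_pos (fringe_mem_P hg i), hg.card_eq]
      have hc1 : ((b - 1 : ℕ) : ℤ) = (b : ℤ) - 1 := by
        have h2 : 1 ≤ b := by omega
        omega
      have hc2 : ((b - 1 + 1 : ℕ) : ℤ) = (b : ℤ) := by
        have h2 : 1 ≤ b := by omega
        omega
      rw [hc1, hc2]
      -- the main integer inequality
      set n : ℤ := (Fintype.card N : ℤ) with hn'
      have hb10 : (0:ℤ) ≤ (b:ℤ) - 1 := by
        have : (1:ℤ) ≤ (b:ℤ) := by exact_mod_cast (by omega : 1 ≤ b)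
        linarith
      have h1 : ((b:ℤ) + (d:ℤ) + 1) * ((d:ℤ) + 1) ≤ n := by
        rw [hn']
        calc ((b:ℤ) + (d:ℤ) + 1) * ((d:ℤ) + 1) = (k':ℤ) * ((d:ℤ)+1) := by
              rw [← hkZ]; ring
          _ ≤ _ := hnZ
      have p1 : n * ((b:ℤ) - 1) ≤ n * ((b:ℤ) - 1) * ((b:ℤ) - (d:ℤ) - 2) := by
        apply le_mul_of_one_le_right (mul_nonneg hn0 hb10)
        have : ((d:ℤ)) + 3 ≤ (b:ℤ) := by exact_mod_cast hbpos
        linarith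
      have p2 : (((b:ℤ) + (d:ℤ) + 1) * ((d:ℤ) + 1)) * ((b:ℤ) - 1) ≤ n * ((b:ℤ) - 1) :=
        mul_le_mul_of_nonneg_right h1 hb10
      have p3 : ((d:ℤ) + 4) * ((b:ℤ) - 1)
          ≤ (((b:ℤ) + (d:ℤ) + 1) * ((d:ℤ) + 1)) * ((b:ℤ) - 1) := by
        apply mul_le_mul_of_nonneg_right _ hb10
        have hb3 : ((d:ℤ)) + 3 ≤ (b:ℤ) := by exact_mod_cast hbpos
        nlinarith
      have hb3 : ((d:ℤ)) + 3 ≤ (b:ℤ) := by exact_mod_cast hbpos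
      nlinarith [p1, p2, p3]
  exact lt_of_le_of_lt hup hlow

lemma case1_nonfringe (hg : IsDomeGadget G d k' P top mid fringe)
    (hout : ∀ x ∈ P, x ≠ top → ∀ y : N, G.Adj x y → y ∈ P)
    (hd : 1 ≤ d) (hk' : 2 * d + 3 < k') (hn : k' * (d + 1) ≤ Fintype.card N)
    {C : Finset N} (hBC : domeBase P top mid ⊆ C)
    (hm : (univ.filter fun i => mid i ∈ C).card < d)
    {x : N} (hx : x ∈ domeBase P top mid) (hxf : x ∉ univ.image fringe) :
    Tterm G C x < Tterm G P x := by
  have hbk := hg_card_base hg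
  set b := (domeBase P top mid).card with hb
  have hbpos : d + 3 ≤ b := by omega
  have hd1 : (1 : ℤ) ≤ (d : ℤ) := by exact_mod_cast hd
  have hkZ : (b : ℤ) + ((d : ℤ) + 1) = (k' : ℤ) := by exact_mod_cast hbk
  have hnZ : (k' : ℤ) * ((d : ℤ) + 1) ≤ (Fintype.card N : ℤ) := by exact_mod_cast hn
  have hn0 : (0 : ℤ) ≤ (Fintype.card N : ℤ) := by positivity
  have hCB : C ∩ domeBase P top mid = domeBase P top mid := inter_eq_right.2 hBC
  have hfC : friendsIn G C x = (domeBase P top mid).erase x := by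
    rw [friendsIn_base_nonfringe hg hout hx hxf, hCB]
  have hfP : friendsIn G P x = (domeBase P top mid).erase x := by
    rw [friendsIn_base_nonfringe hg hout hx hxf, P_inter_base]
  have hne : (friendsIn G C x).Nonempty := by
    rw [hfC]
    apply card_pos.1
    rw [card_erase_of_mem hx]
    omega
  apply Tterm_lt_Tterm (hfC.trans hfP.symm) hne
  rw [hfC, hfP, sum_fval_base hg hout (erase_subset _ _)
      ((erase_subset _ _).trans hBC),
    sum_fval_base hg hout (erase_subset _ _)
      ((erase_subset _ _).trans base_subset_P),
    sum_muF_erase hg hx, sum_muF_erase hg hx, hCB, P_inter_base,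
    filter_mid_P hg, muF_eq_zero hxf, muF_eq_zero hxf, hg.card_eq,
    card_erase_of_mem hx, card_univ, Fintype.card_fin]
  have hc1 : ((b - 1 : ℕ) : ℤ) = (b : ℤ) - 1 := by
    have h2 : 1 ≤ b := by omega
    omega
  rw [hc1]
  set n : ℤ := (Fintype.card N : ℤ) with hn'
  set m' : ℕ := (univ.filter fun i => mid i ∈ C).card with hm'
  have hmZ : (m' : ℤ) ≤ (d : ℤ) - 1 := by
    have : m' + 1 ≤ d := hm
    exact_mod_cast by omega
  have hCge : (b : ℤ) + (m' : ℤ) ≤ (C.card : ℤ) := by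
    have h1 := card_C_ge hg C
    rw [hCB] at h1
    exact_mod_cast h1
  have hb10 : (0:ℤ) ≤ (b:ℤ) - 1 := by
    have : (1:ℤ) ≤ (b:ℤ) := by exact_mod_cast (by omega : 1 ≤ b)
    linarith
  have hKC : (k':ℤ) - (C.card : ℤ) ≤ (d:ℤ) + 1 - (m':ℤ) := by linarith
  have p1 : ((b:ℤ) - 1) * ((k':ℤ) - (C.card : ℤ))
      ≤ ((b:ℤ) - 1) * ((d:ℤ) + 1 - (m':ℤ)) := mul_le_mul_of_nonneg_left hKC hb10
  have hnbig : 2*(b:ℤ) + 2*(d:ℤ) + 2 ≤ n := by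
    rw [hn']
    calc 2*(b:ℤ) + 2*(d:ℤ) + 2 = (k':ℤ) * 2 := by rw [← hkZ]; ring
      _ ≤ (k':ℤ) * ((d:ℤ) + 1) := by
          apply mul_le_mul_of_nonneg_left (by linarith)
          linarith
      _ ≤ _ := hnZ
  have hpos2 : (0:ℤ) ≤ n + 1 - ((b:ℤ) - 1) := by linarith
  have p2 : 1 * (n + 1 - ((b:ℤ) - 1)) ≤ ((d:ℤ) - (m':ℤ)) * (n + 1 - ((b:ℤ) - 1)) :=
    mul_le_mul_of_nonneg_right (by linarith) hpos2
  nlinarith [p1, p2]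

lemma case1_fringe (hg : IsDomeGadget G d k' P top mid fringe)
    (hout : ∀ x ∈ P, x ≠ top → ∀ y : N, G.Adj x y → y ∈ P)
    (hd : 1 ≤ d) (hk' : 2 * d + 3 < k') (hn : k' * (d + 1) ≤ Fintype.card N)
    {C : Finset N} (hBC : domeBase P top mid ⊆ C)
    (hmids : ∀ i, mid i ∈ C) (hCP : C ≠ P) (i0 : Fin d) :
    Tterm G C (fringe i0) < Tterm G P (fringe i0) := by
  have hbk := hg_card_base hg
  set b := (domeBase P top mid).card with hb
  have hbpos : d + 3 ≤ b := by omega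
  have hd1 : (1 : ℤ) ≤ (d : ℤ) := by exact_mod_cast hd
  have hkZ : (b : ℤ) + ((d : ℤ) + 1) = (k' : ℤ) := by exact_mod_cast hbk
  have hnZ : (k' : ℤ) * ((d : ℤ) + 1) ≤ (Fintype.card N : ℤ) := by exact_mod_cast hn
  have hn0 : (0 : ℤ) ≤ (Fintype.card N : ℤ) := by positivity
  have hx : fringe i0 ∈ domeBase P top mid := hg.fringe_mem i0
  have hCB : C ∩ domeBase P top mid = domeBase P top mid := inter_eq_right.2 hBC
  have hCm : C ∩ ({mid i0} : Finset N) = {mid i0} := by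
    rw [inter_comm]; exact singleton_inter_of_mem (hmids i0)
  have hPm : P ∩ ({mid i0} : Finset N) = {mid i0} := by
    rw [inter_comm]; exact singleton_inter_of_mem (hg.mid_mem i0)
  have hfC : friendsIn G C (fringe i0)
      = (domeBase P top mid).erase (fringe i0) ∪ {mid i0} := by
    rw [friendsIn_fringe hg hout i0 C, hCB, hCm]
  have hfP : friendsIn G P (fringe i0)
      = (domeBase P top mid).erase (fringe i0) ∪ {mid i0} := by
    rw [friendsIn_fringe hg hout i0 P, P_inter_base, hPm]
  have hdisj : Disjoint ((domeBase P top mid).erase (fringe i0)) ({mid i0} : Finset N) := by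
    rw [disjoint_singleton_right]
    exact fun h => mid_not_base i0 (mem_of_mem_erase h)
  have hne : (friendsIn G C (fringe i0)).Nonempty := by
    rw [hfC]
    exact ⟨mid i0, mem_union_right _ (mem_singleton_self _)⟩
  have hmux : muF mid fringe C (fringe i0) = 1 := by
    rw [muF_fringe hg.fringe_inj, if_pos (hmids i0)]
  have hmuxP : muF mid fringe P (fringe i0) = 1 := by
    rw [muF_fringe hg.fringe_inj, if_pos (hg.mid_mem i0)]
  have hfiltC : (univ.filter fun i => mid i ∈ C) = univ :=
    filter_true_of_mem (fun i _ => hmids i)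
  apply Tterm_lt_Tterm (hfC.trans hfP.symm) hne
  rw [hfC, hfP, sum_union hdisj, sum_union hdisj, sum_singleton, sum_singleton,
    sum_fval_base hg hout (erase_subset _ _) ((erase_subset _ _).trans hBC),
    sum_fval_base hg hout (erase_subset _ _)
      ((erase_subset _ _).trans base_subset_P),
    sum_muF_erase hg hx, sum_muF_erase hg hx, hCB, P_inter_base,
    filter_mid_P hg, hfiltC, hmux, hmuxP, hg.card_eq,
    card_erase_of_mem hx, card_univ, Fintype.card_fin,
    fval_mid_mem hg hout i0 (hmids i0), if_pos (hBC hx),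
    fval_mid_mem hg hout i0 (hg.mid_mem i0), if_pos hg.top_mem,
    if_pos (fringe_mem_P hg i0), hg.card_eq]
  have hc1 : ((b - 1 : ℕ) : ℤ) = (b : ℤ) - 1 := by
    have h2 : 1 ≤ b := by omega
    omega
  rw [hc1]
  set n : ℤ := (Fintype.card N : ℤ) with hn'
  have hb0 : (0:ℤ) ≤ (b:ℤ) := by positivity
  have hnk : (k':ℤ) ≤ n := by
    rw [hn']
    calc (k':ℤ) = (k':ℤ) * 1 := by ring
      _ ≤ (k':ℤ) * ((d:ℤ) + 1) := by
          apply mul_le_mul_of_nonneg_left (by linarith)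
          linarith
      _ ≤ _ := hnZ
  by_cases ht : top ∈ C
  · -- then P ⊆ C and C ≠ P, so C.card ≥ k' + 1
    have hPC : P ⊆ C := by
      intro p hp
      by_cases h1 : p = top
      · exact h1 ▸ ht
      by_cases h2 : ∀ i, p ≠ mid i
      · exact hBC (mem_domeBase.2 ⟨hp, h1, h2⟩)
      · push_neg at h2
        obtain ⟨i, rfl⟩ := h2
        exact hmids i
    have hss : P ⊂ C := (ssubset_iff_subset_ne).2 ⟨hPC, Ne.symm hCP⟩
    have hcard : k' + 1 ≤ C.card := by
      have := card_lt_card hss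
      rw [hg.card_eq] at this
      omega
    have hcardZ : (k':ℤ) + 1 ≤ (C.card : ℤ) := by exact_mod_cast hcard
    rw [if_pos ht]
    have hKC : (k':ℤ) - (C.card : ℤ) ≤ -1 := by linarith
    have p1 : (b:ℤ) * ((k':ℤ) - (C.card : ℤ)) ≤ (b:ℤ) * (-1) :=
      mul_le_mul_of_nonneg_left hKC hb0
    have hb3 : ((d:ℤ)) + 3 ≤ (b:ℤ) := by exact_mod_cast hbpos
    nlinarith [p1]
  · rw [if_neg ht]
    have hCge : (b : ℤ) + (d : ℤ) ≤ (C.card : ℤ) := by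
      have h1 := card_C_ge hg C
      rw [hCB, hfiltC, card_univ, Fintype.card_fin] at h1
      exact_mod_cast h1
    have hKC : (k':ℤ) - (C.card : ℤ) ≤ 1 := by linarith
    have p1 : (b:ℤ) * ((k':ℤ) - (C.card : ℤ)) ≤ (b:ℤ) * 1 :=
      mul_le_mul_of_nonneg_left hKC hb0
    have hb3 : ((d:ℤ)) + 3 ≤ (b:ℤ) := by exact_mod_cast hbpos
    nlinarith [p1]

end DomeCasesAux

/-- Proposition (dome gadget, avg-AL): in an avg-AL altruistic hedonic game (with
weight `w ≥ n^4`) on `n` players whose network of friends `G` contains a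
`(d,k')`-dome gadget on `P` (`d ≥ 1`, `k' > 2d+3`, `n ≥ k'·(d+1)`) such that no
player of `P` except the top player has a friend outside `P`, if `P` is a coalition
of the coalition structure `Γ` and a coalition `C` blocks `Γ`, then `C` contains no
player of the base clique (in particular, no fringe player). -/
theorem dome_base_not_in_blocking_avgAL {N : Type*} [Fintype N] [DecidableEq N]
    (G : SimpleGraph N) (w : ℚ) (hw : (Fintype.card N : ℚ) ^ 4 ≤ w)
    (d k' : ℕ) (hd : 1 ≤ d) (hk' : 2 * d + 3 < k')
    (hn : k' * (d + 1) ≤ Fintype.card N)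
    (P : Finset N) (top : N) (mid fringe : Fin d → N)
    (hgadget : IsDomeGadget G d k' P top mid fringe)
    (houtside : ∀ x ∈ P, x ≠ top → ∀ y : N, G.Adj x y → y ∈ P)
    (Γ : CoalitionStructure N) (hΓ : ∀ i ∈ P, Γ.part i = P)
    (C : Finset N) (hC : Blocks (utilAvgAL G w) Γ C) :
    ∀ x ∈ domeBase P top mid, x ∉ C := by
  intro x0 hx0 hx0C
  have hbk := hg_card_base hgadget
  have hn2 : 2 ≤ Fintype.card N := by
    have h1 : 2 * 1 ≤ k' * (d + 1) := Nat.mul_le_mul (by omega) (by omega)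
    omega
  obtain ⟨-, hblocks⟩ := hC
  have contra : ∀ x ∈ C, x ∈ P → Tterm G C x < Tterm G P x → False := by
    intro x hxC hxP hT
    have h1 := hblocks x hxC
    rw [hΓ x hxP] at h1
    exact absurd h1 (not_lt.2 (le_of_lt (util_lt_of_Tterm_lt G hw hn2 hT)))
  by_cases hBC : domeBase P top mid ⊆ C
  · by_cases hmids : ∀ i, mid i ∈ C
    · by_cases hCP : C = P
      · subst hCP
        have h1 := hblocks x0 hx0C
        rw [hΓ x0 (base_subset_P hx0)] at h1
        exact lt_irrefl _ h1
      · exact contra (fringe ⟨0, hd⟩) (hBC (hgadget.fringe_mem _))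
          (fringe_mem_P hgadget _)
          (case1_fringe hgadget houtside hd hk' hn hBC hmids hCP ⟨0, hd⟩)
    · push_neg at hmids
      obtain ⟨j, hj⟩ := hmids
      have hm : (univ.filter fun i => mid i ∈ C).card < d := by
        have hss : (univ.filter fun i => mid i ∈ C) ⊂ univ :=
          (ssubset_iff_of_subset (subset_univ _)).2 ⟨j, mem_univ j, by simp [hj]⟩
        have h2 := card_lt_card hss
        rwa [card_univ, Fintype.card_fin] at h2
      have hex : ∃ z, z ∈ domeBase P top mid ∧ z ∉ univ.image fringe := by
        by_contra h
        push_neg at h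
        have hsub : domeBase P top mid ⊆ univ.image fringe := fun z hz => h z hz
        have h1 := card_le_card hsub
        rw [hg_card_fringe hgadget] at h1
        omega
      obtain ⟨z, hz, hzf⟩ := hex
      exact contra z (hBC hz) (base_subset_P hz)
        (case1_nonfringe hgadget houtside hd hk' hn hBC hm hz hzf)
  · obtain ⟨y, hy, hyC⟩ := not_subset.1 hBC
    by_cases hall : C ∩ domeBase P top mid ⊆ univ.image fringe
    · have hx0f : x0 ∈ univ.image fringe := hall (mem_inter.2 ⟨hx0C, hx0⟩)
      obtain ⟨i, -, hi⟩ := mem_image.1 hx0f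
      subst hi
      exact contra (fringe i) hx0C (base_subset_P hx0)
        (case2b hgadget houtside hd hk' hn hy hyC hall i hx0C)
    · obtain ⟨z, hz, hzf⟩ := not_subset.1 hall
      have hz' := mem_inter.1 hz
      exact contra z hz'.1 (base_subset_P hz'.2)
        (case2a hgadget houtside hd hk' hn hy hyC hz'.2 hzf hz'.1)
end
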